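/- arXiv:0709.1670 — 3 statements merged into one kernel-verified Lean document; each statement's English description precedes it below -/
import Mathlib

section
/- Let φ_ap ∈ C([t₀,T),F) be an approximate solution of the Volterra problem VP(f₀,t₀), let ℰ ∈ C([t₀,T),[0,∞)) satisfy ‖E(φ_ap)(t)‖ ≤ ℰ(t) for all t ∈ [t₀,T), and let ℓ be a growth estimator for P from φ_ap, defined on the subgraph of a function ρ ∈ C([t₀,T),(0,∞]). If there exists ℛ ∈ C([t₀,T),[0,∞)) with ℛ(t) < ρ(t) for all t ∈ [t₀,T) and satisfying the control inequality ℰ(t) + ∫_{t₀}^t u₋(t−s) ℓ(ℛ(s),s) ds ≤ ℛ(t) for all t ∈ [t₀,T), then VP(f₀,t₀) has a solution φ : [t₀,T) → F, and ‖φ(t) − φ_ap(t)‖ ≤ ℛ(t) for all t ∈ [t₀,T). -/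
/-!
On every compact interval `[t₀, τ] ⊆ [t₀, T)` the solution is the fixed point of the Picard map
`φ ↦ e^{(· - t₀)A} f₀ + ∫_{t₀}^{·} e^{(· - s)A} P(φ(s), s) ds` on the continuous curves lying in
the closed tube `‖φ(t) - φ_ap(t)‖ ≤ ℛ(t)`. The growth estimator bounds
`P(φ(s), s) - P(φ_ap(s), s)` along the tube and the integral error bounds the defect of `φ_ap`,
so the control inequality says exactly that the Picard map sends the tube into itself. The tube is
closed and bounded, so `P` is Lipschitz on it, with constant `L` say. Since `u₋` is integrable at
`0`, there is a `γ` with `L ∫₀^{τ-t₀} u₋(u) e^{-γu} du < 1`, and then the Picard map contracts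
the weighted distance `sup_t e^{-γ(t-t₀)} ‖φ(t) - ψ(t)‖`; hence one of its iterates contracts the
sup distance. The resulting solutions on the intervals `[t₀, τ]` are unique in the tube, hence
compatible, and they glue to a solution on `[t₀, T)`.
-/

open Set MeasureTheory Filter Topology Function
open scoped Interval

theorem intervalIntegrable_comp_sub_of_integrableOn {k : ℝ → ℝ}
    (hk : ∀ c, IntegrableOn k (Ioc 0 c)) {a t : ℝ} (hat : a ≤ t) :
    IntervalIntegrable (fun s => k (t - s)) volume a t := by
  have h : IntervalIntegrable k volume 0 (t - a) :=
    (intervalIntegrable_iff_integrableOn_Ioc_of_le (by linarith)).2 (hk _)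
  simpa using (h.comp_sub_left t).symm

theorem integrableOn_Ioc_of_le_div_rpow {k : ℝ → ℝ} {σ C δ : ℝ}
    (hk : ContinuousOn k (Ioi 0)) (hk0 : ∀ t > 0, 0 ≤ k t) (hσ : 0 < σ) (hδ : 0 < δ)
    (hC : ∀ t ∈ Ioo 0 δ, k t ≤ C / t ^ (1 - σ)) (c : ℝ) : IntegrableOn k (Ioc 0 c) := by
  have hnear : IntegrableOn k (Ioo 0 δ) := by
    have hpow : IntegrableOn (fun t => C * t ^ (-(1 - σ))) (Ioo 0 δ) :=
      ((intervalIntegral.integrableOn_Ioo_rpow_iff hδ).2 (by linarith)).const_mul C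
    refine hpow.mono' ((hk.mono fun t ht => ht.1).aestronglyMeasurable measurableSet_Ioo)
      (ae_restrict_of_forall_mem measurableSet_Ioo fun t ht => ?_)
    rw [Real.norm_of_nonneg (hk0 t ht.1), Real.rpow_neg ht.1.le, ← div_eq_mul_inv]
    exact hC t ht
  have hfar : IntegrableOn k (Icc (δ / 2) c) :=
    (hk.mono fun t ht => by simp only [mem_Ioi]; linarith [ht.1]).integrableOn_Icc
  refine (hnear.union hfar).mono_set fun t ht => ?_
  rcases lt_or_ge t δ with h | h
  · exact Or.inl ⟨ht.1, h⟩
  · exact Or.inr ⟨by linarith, ht.2⟩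

theorem integral_comp_sub_sub {E : Type*} [NormedAddCommGroup E] [NormedSpace ℝ E]
    (f : ℝ → ℝ → E) (a t : ℝ) :
    ∫ s in a..t, f (t - s) s = ∫ u in 0..t - a, f u (t - u) := by
  simpa only [sub_sub_cancel, sub_self] using
    intervalIntegral.integral_comp_sub_left (a := a) (b := t) (fun u => f u (t - u)) t

theorem tendsto_integral_mul_exp_neg_atTop {k : ℝ → ℝ} {c : ℝ} (hc : 0 ≤ c)
    (hk : IntegrableOn k (Ioc 0 c)) :
    Tendsto (fun γ => ∫ u in 0..c, k u * Real.exp (-(γ * u))) atTop (𝓝 0) := by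
  have hIoc : Ι 0 c = Ioc 0 c := uIoc_of_le hc
  simpa using intervalIntegral.tendsto_integral_filter_of_dominated_convergence (f := 0)
    (F := fun γ u => k u * Real.exp (-(γ * u))) (l := atTop) (fun u => ‖k u‖)
    (Eventually.of_forall fun γ => by
      rw [hIoc]
      exact hk.aestronglyMeasurable.mul
        (by fun_prop : Continuous fun u => Real.exp (-(γ * u))).aestronglyMeasurable)
    ((eventually_ge_atTop 0).mono fun γ hγ => ae_of_all _ fun u hu => by
      rw [hIoc] at hu
      rw [norm_mul, Real.norm_of_nonneg (Real.exp_pos _).le]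
      exact mul_le_of_le_one_right (norm_nonneg _)
        (Real.exp_le_one_iff.2 (neg_nonpos.2 (mul_nonneg hγ hu.1.le))))
    ((intervalIntegrable_iff_integrableOn_Ioc_of_le hc).2 hk.norm)
    (ae_of_all _ fun u hu => by
      rw [hIoc] at hu
      simpa using (Real.tendsto_exp_neg_atTop_nhds_zero.comp
        (tendsto_id.atTop_mul_const hu.1)).const_mul (k u))

theorem exists_unique_isFixedPt_of_weighted_contraction {α F : Type*} [TopologicalSpace α]
    [CompactSpace α] [NormedAddCommGroup F] {S : Set C(α, F)} [CompleteSpace S] [Nonempty S]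
    (T : S → S) {w : α → ℝ} {q B : ℝ} (hq0 : 0 ≤ q) (hq1 : q < 1) (hw : ∀ p, 1 ≤ w p)
    (hwB : ∀ p, w p ≤ B)
    (hT : ∀ x y : S, ∀ D, (∀ p, ‖x.1 p - y.1 p‖ ≤ D * w p) →
      ∀ p, ‖(T x).1 p - (T y).1 p‖ ≤ q * D * w p) :
    ∃ x, IsFixedPt T x ∧ ∀ y, IsFixedPt T y → y = x := by
  have hiter : ∀ n x y p, ‖(T^[n] x).1 p - (T^[n] y).1 p‖ ≤ q ^ n * dist x y * w p := by
    intro n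
    induction n with
    | zero =>
      intro x y p
      rw [pow_zero, one_mul, iterate_zero_apply, iterate_zero_apply, ← dist_eq_norm]
      exact ((ContinuousMap.dist_apply_le_dist p).trans_eq (Subtype.dist_eq x y).symm).trans
        (le_mul_of_one_le_right dist_nonneg (hw p))
    | succ n ih =>
      intro x y p
      rw [iterate_succ_apply', iterate_succ_apply', pow_succ', mul_assoc q]
      exact hT _ _ _ (ih x y) p
  have hB : 0 < max B 1 := zero_lt_one.trans_le (le_max_right B 1)
  obtain ⟨n, hn⟩ := exists_pow_lt_of_lt_one (inv_pos.2 hB) hq1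
  have hc0 : 0 ≤ q ^ n * max B 1 := by positivity
  have hc1 : q ^ n * max B 1 < 1 := by
    simpa [hB.ne'] using mul_lt_mul_of_pos_right hn hB
  have hcontr : ContractingWith (q ^ n * max B 1).toNNReal T^[n] := by
    refine ⟨by rwa [← NNReal.coe_lt_coe, Real.coe_toNNReal _ hc0], ?_⟩
    refine LipschitzWith.of_dist_le_mul fun x y => ?_
    rw [Real.coe_toNNReal _ hc0, Subtype.dist_eq]
    refine (ContinuousMap.dist_le (by positivity)).2 fun p => ?_
    rw [dist_eq_norm]
    refine (hiter n x y p).trans ?_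
    rw [mul_right_comm]
    gcongr
    exact (hwB p).trans (le_max_left B 1)
  exact ⟨_, hcontr.isFixedPt_fixedPoint_iterate,
    fun y hy => hcontr.fixedPoint_unique (hy.iterate n)⟩

def IsContinuousSelectionOn {α F : Type*} [TopologicalSpace α] [TopologicalSpace F]
    (K : α → Set F) (s : Set α) (φ : α → F) : Prop :=
  ContinuousOn φ s ∧ ∀ x ∈ s, φ x ∈ K x

theorem exists_unique_fixed_curve_of_weighted_contraction {F : Type*} [NormedAddCommGroup F]
    [CompleteSpace F] {a b : ℝ} (hab : a ≤ b) {K : ℝ → Set F} (hK : ∀ s, IsClosed (K s))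
    {Φ : (ℝ → F) → ℝ → F} (h₀ : ∃ φ, IsContinuousSelectionOn K (Icc a b) φ)
    (hmaps : ∀ φ, IsContinuousSelectionOn K (Icc a b) φ →
      IsContinuousSelectionOn K (Icc a b) (Φ φ))
    (hcongr : ∀ φ ψ, EqOn φ ψ (Icc a b) → EqOn (Φ φ) (Φ ψ) (Icc a b))
    {w : ℝ → ℝ} {q B : ℝ} (hq0 : 0 ≤ q) (hq1 : q < 1) (hw : ∀ s ∈ Icc a b, 1 ≤ w s)
    (hwB : ∀ s ∈ Icc a b, w s ≤ B)
    (hcontr : ∀ φ ψ, IsContinuousSelectionOn K (Icc a b) φ →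
      IsContinuousSelectionOn K (Icc a b) ψ → ∀ D, (∀ s ∈ Icc a b, ‖φ s - ψ s‖ ≤ D * w s) →
      ∀ t ∈ Icc a b, ‖Φ φ t - Φ ψ t‖ ≤ q * D * w t) :
    (∃ φ, IsContinuousSelectionOn K (Icc a b) φ ∧ EqOn (Φ φ) φ (Icc a b)) ∧
      ∀ φ ψ, IsContinuousSelectionOn K (Icc a b) φ ∧ EqOn (Φ φ) φ (Icc a b) →
        IsContinuousSelectionOn K (Icc a b) ψ ∧ EqOn (Φ ψ) ψ (Icc a b) →
        EqOn φ ψ (Icc a b) := by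
  set S : Set C(Icc a b, F) := {x | ∀ p : Icc a b, x p ∈ K p}
  have hS : IsClosed S := by
    simp only [S, ofPred_forall]
    exact isClosed_iInter fun p => (hK p).preimage (continuous_eval_const p)
  have : CompleteSpace S := IsClosed.completeSpace_coe (hs := hS)
  let toS (φ : ℝ → F) (hφ : IsContinuousSelectionOn K (Icc a b) φ) : S :=
    ⟨⟨(Icc a b).domRestrict φ, hφ.1.domRestrict⟩, fun p => hφ.2 p p.2⟩
  have hext (x : S) : IsContinuousSelectionOn K (Icc a b) (IccExtend hab x.1) :=
    ⟨x.1.continuous.Icc_extend'.continuousOn, fun s hs => by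
      rw [IccExtend_of_mem hab _ hs]; exact x.2 ⟨s, hs⟩⟩
  have htoS_ext (x : S) : toS _ (hext x) = x := by
    ext p
    exact IccExtend_val hab _ p
  let T (x : S) : S := toS _ (hmaps _ (hext x))
  have : Nonempty S := ⟨toS _ h₀.choose_spec⟩
  have hfix (φ) (hφ : IsContinuousSelectionOn K (Icc a b) φ) :
      IsFixedPt T (toS φ hφ) ↔ EqOn (Φ φ) φ (Icc a b) := by
    have hΦ : EqOn (Φ (IccExtend hab (toS φ hφ).1)) (Φ φ) (Icc a b) :=
      hcongr _ _ fun s hs => IccExtend_of_mem hab _ hs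
    simp only [IsFixedPt, Subtype.ext_iff, ContinuousMap.ext_iff, Subtype.forall]
    exact forall₂_congr fun s hs => by rw [← hΦ hs]; rfl
  obtain ⟨x, hx, huniq⟩ := exists_unique_isFixedPt_of_weighted_contraction T hq0 hq1
    (w := fun p => w p) (fun p => hw p p.2) (fun p => hwB p p.2)
    fun x y D hxy p => hcontr _ _ (hext x) (hext y) D (fun s hs => by
      simpa only [IccExtend_of_mem hab _ hs] using hxy ⟨s, hs⟩) p p.2
  refine ⟨⟨_, hext x, (hfix _ (hext x)).1 (by rwa [htoS_ext])⟩,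
    fun φ ψ ⟨hφ, hφf⟩ ⟨hψ, hψf⟩ s hs => ?_⟩
  have := (huniq _ ((hfix φ hφ).2 hφf)).trans (huniq _ ((hfix ψ hψ).2 hψf)).symm
  exact congrArg (fun y : S => y.1 ⟨s, hs⟩) this

theorem exists_forall_of_existsUnique_Icc {α : Type*} [Nonempty α] {S : ℝ → (ℝ → α) → Prop}
    {I : Set ℝ} {t₀ : ℝ} (hI : ∀ τ ∈ I, Icc t₀ τ ⊆ I)
    (hmono : ∀ τ φ, S τ φ → ∀ τ' ∈ Icc t₀ τ, S τ' φ)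
    (hcongr : ∀ τ φ ψ, S τ φ → EqOn φ ψ (Icc t₀ τ) → S τ ψ)
    (h : ∀ τ ∈ I, (∃ φ, S τ φ) ∧ ∀ φ ψ, S τ φ → S τ ψ → EqOn φ ψ (Icc t₀ τ)) :
    ∃ φ, ∀ τ ∈ I, S τ φ := by
  choose! sol hsol using fun τ hτ => (h τ hτ).1
  refine ⟨fun t => sol t t, fun τ hτ => hcongr τ _ _ (hsol τ hτ) fun t ht => ?_⟩
  exact (h t (hI τ hτ ht)).2 _ _ (hmono τ _ (hsol τ hτ) t ht) (hsol t (hI τ hτ ht))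
    ⟨ht.1, le_rfl⟩

theorem continuousOn_of_forall_Icc {X : Type*} [TopologicalSpace X] {φ : ℝ → X} {t₀ : ℝ}
    {T : EReal} (h : ∀ τ, t₀ ≤ τ → (τ : EReal) < T → ContinuousOn φ (Icc t₀ τ)) :
    ContinuousOn φ {t | t₀ ≤ t ∧ (t : EReal) < T} := by
  rintro t ⟨ht₀, htT⟩
  obtain ⟨τ, htτ, hτT⟩ := EReal.lt_iff_exists_real_btwn.1 htT
  have htτ' : t < τ := EReal.coe_lt_coe_iff.1 htτ
  refine ((h τ (ht₀.trans htτ'.le) hτT) t ⟨ht₀, htτ'.le⟩).mono_of_mem_nhdsWithin ?_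
  exact mem_of_superset (inter_mem_nhdsWithin _ (Iio_mem_nhds htτ'))
    fun s hs => ⟨hs.1.1, hs.2.le⟩

theorem continuousOn_of_norm_sub_le {E G : Type*} [SeminormedAddCommGroup E]
    [SeminormedAddCommGroup G] {f : E × ℝ → G} {C : Set (E × ℝ)} {L M : ℝ}
    (h : ∀ p ∈ C, ∀ q ∈ C, ‖f p - f q‖ ≤ L * ‖p.1 - q.1‖ + M * |p.2 - q.2|) :
    ContinuousOn f C := by
  refine (LipschitzOnWith.of_dist_le_mul (K := (|L| + |M|).toNNReal)
    fun p hp q hq => ?_).continuousOn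
  rw [Real.coe_toNNReal _ (by positivity), dist_eq_norm, dist_eq_norm, add_mul]
  refine (h p hp q hq).trans (add_le_add ?_ ?_)
  · exact (mul_le_mul_of_nonneg_right (le_abs_self L) (norm_nonneg _)).trans
      (mul_le_mul_of_nonneg_left (norm_fst_le (p - q)) (abs_nonneg L))
  · exact (mul_le_mul_of_nonneg_right (le_abs_self M) (abs_nonneg _)).trans
      (mul_le_mul_of_nonneg_left (norm_snd_le (p - q)) (abs_nonneg M))

namespace Volterra

section Tube

variable {F : Type*} [NormedAddCommGroup F]

def tube (φap : ℝ → F) (R : ℝ → ℝ) (a b : ℝ) : Set (F × ℝ) :=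
  {p | p.2 ∈ Icc a b ∧ p.1 ∈ Metric.closedBall (φap p.2) (R p.2)}

variable {φap : ℝ → F} {R : ℝ → ℝ} {a b : ℝ}

theorem isClosed_tube (hφap : ContinuousOn φap (Icc a b)) (hR : ContinuousOn R (Icc a b)) :
    IsClosed (tube φap R a b) := by
  have hsnd : MapsTo Prod.snd ((univ : Set F) ×ˢ Icc a b) (Icc a b) := fun p hp => hp.2
  have := (isClosed_univ.prod isClosed_Icc).isClosed_le
    (continuous_dist.comp_continuousOn
      (continuousOn_fst.prodMk (hφap.comp continuousOn_snd hsnd)))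
    (hR.comp continuousOn_snd hsnd)
  convert this using 1
  ext p
  simp [tube]

theorem isBounded_tube (hφap : ContinuousOn φap (Icc a b)) (hR : ContinuousOn R (Icc a b)) :
    Bornology.IsBounded (tube φap R a b) := by
  obtain ⟨Mφ, hMφ⟩ := isCompact_Icc.exists_bound_of_continuousOn hφap
  obtain ⟨MR, hMR⟩ := isCompact_Icc.exists_bound_of_continuousOn hR
  refine ((Metric.isBounded_closedBall (x := (0 : F)) (r := Mφ + MR)).prod
    (Metric.isBounded_Icc a b)).subset fun p ⟨hs, hf⟩ => ⟨?_, hs⟩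
  rw [mem_closedBall_zero_iff]
  rw [Metric.mem_closedBall, dist_eq_norm] at hf
  linarith [norm_le_insert' p.1 (φap p.2), hMφ _ hs, le_abs_self (R p.2),
    (Real.norm_eq_abs (R p.2)) ▸ hMR _ hs]

end Tube

variable {F G : Type*} [NormedAddCommGroup F]

section Picard

variable [NormedSpace ℝ F]

noncomputable def duhamel (W : ℝ → G → F) (g : ℝ → G) (a t : ℝ) : F :=
  ∫ s in a..t, W (t - s) (g s)

theorem duhamel_congr {W : ℝ → G → F} {g₁ g₂ : ℝ → G} {a t : ℝ} (hat : a ≤ t)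
    (h : EqOn g₁ g₂ (Icc a t)) : duhamel W g₁ a t = duhamel W g₂ a t :=
  intervalIntegral.integral_congr fun s hs => by
    rw [uIcc_of_le hat] at hs
    simp only [h hs]

theorem duhamel_eq_integral_indicator {W : ℝ → G → F} {g : ℝ → G} {a b t : ℝ}
    (ht : t ∈ Icc a b) :
    duhamel W g a t = ∫ u in 0..b - a, (Iic (t - a)).indicator (fun u => W u (g (t - u))) u := by
  rw [duhamel, integral_comp_sub_sub (fun u s => W u (g s)),
    intervalIntegral.integral_of_le (by linarith [ht.1]),
    intervalIntegral.integral_of_le (by linarith [ht.1, ht.2]),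
    setIntegral_indicator measurableSet_Iic, Ioc_inter_Iic, min_eq_right (by linarith [ht.2])]

variable (W : ℝ → G → F) (P : F → ℝ → G) (v : ℝ → F) (a : ℝ)

noncomputable def picard (φ : ℝ → F) (t : ℝ) : F :=
  v t + duhamel W (fun s => P (φ s) s) a t

def IsTubeSolution (φap : ℝ → F) (R : ℝ → ℝ) (b : ℝ) (φ : ℝ → F) : Prop :=
  IsContinuousSelectionOn (fun s => Metric.closedBall (φap s) (R s)) (Icc a b) φ ∧
    EqOn (picard W P v a φ) φ (Icc a b)

variable {W P v a} {φ ψ φap : ℝ → F} {R : ℝ → ℝ} {b : ℝ}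

theorem picard_congr (h : EqOn φ ψ (Icc a b)) :
    EqOn (picard W P v a φ) (picard W P v a ψ) (Icc a b) := fun t ht =>
  congrArg (v t + ·) (duhamel_congr ht.1 fun s hs => by simp only [h ⟨hs.1, hs.2.trans ht.2⟩])

theorem IsTubeSolution.mono (h : IsTubeSolution W P v a φap R b φ) {b' : ℝ} (hb : b' ≤ b) :
    IsTubeSolution W P v a φap R b' φ :=
  have hsub := Icc_subset_Icc_right hb
  ⟨⟨h.1.1.mono hsub, fun s hs => h.1.2 s (hsub hs)⟩, h.2.mono hsub⟩

theorem IsTubeSolution.congr (h : IsTubeSolution W P v a φap R b φ) (he : EqOn φ ψ (Icc a b)) :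
    IsTubeSolution W P v a φap R b ψ :=
  ⟨⟨h.1.1.congr he.symm, fun s hs => he hs ▸ h.1.2 s hs⟩,
    fun t ht => by rw [← picard_congr he ht, h.2 ht, he ht]⟩

end Picard

variable [NormedAddCommGroup G]

/-- `W t` plays the role of `e^{tA} : F₋ → F` and `k` that of `u₋`. -/
structure IntegrableKernel (W : ℝ → G → F) (k : ℝ → ℝ) : Prop where
  continuousOn : ContinuousOn (fun p : G × ℝ => W p.2 p.1) (univ ×ˢ Ioi 0)
  map_sub : ∀ u > 0, ∀ f g, W u (f - g) = W u f - W u g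
  norm_le : ∀ u > 0, ∀ f, ‖W u f‖ ≤ k u * ‖f‖
  nonneg : ∀ u > 0, 0 ≤ k u
  integrableOn : ∀ c, IntegrableOn k (Ioc 0 c)

namespace IntegrableKernel

variable {W : ℝ → G → F} {k : ℝ → ℝ} {g g₁ g₂ : ℝ → G} {a b t : ℝ}

theorem intervalIntegrable_duhamel (hK : IntegrableKernel W k) (hat : a ≤ t)
    (hg : ContinuousOn g (Icc a t)) :
    IntervalIntegrable (fun s => W (t - s) (g s)) volume a t := by
  obtain ⟨C, hC⟩ := isCompact_Icc.exists_bound_of_continuousOn hg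
  have hcont : ContinuousOn (fun s => W (t - s) (g s)) (Ioo a t) :=
    hK.continuousOn.comp ((hg.mono Ioo_subset_Icc_self).prodMk
      (continuousOn_const.sub continuousOn_id)) fun s hs => ⟨trivial, sub_pos.2 hs.2⟩
  rw [intervalIntegrable_iff_integrableOn_Ioo_of_le hat]
  refine ((((intervalIntegrable_comp_sub_of_integrableOn hK.integrableOn hat).mul_const C).1
    ).mono_set Ioo_subset_Ioc_self).mono' (hcont.aestronglyMeasurable measurableSet_Ioo)
    (ae_restrict_of_forall_mem measurableSet_Ioo fun s hs => ?_)
  exact (hK.norm_le _ (sub_pos.2 hs.2) _).trans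
    (mul_le_mul_of_nonneg_left (hC s (Ioo_subset_Icc_self hs)) (hK.nonneg _ (sub_pos.2 hs.2)))

variable [NormedSpace ℝ F]

theorem duhamel_sub (hK : IntegrableKernel W k) (hat : a ≤ t)
    (hg₁ : ContinuousOn g₁ (Icc a t)) (hg₂ : ContinuousOn g₂ (Icc a t)) :
    duhamel W g₁ a t - duhamel W g₂ a t = duhamel W (fun s => g₁ s - g₂ s) a t := by
  rw [duhamel, duhamel, ← intervalIntegral.integral_sub (hK.intervalIntegrable_duhamel hat hg₁)
    (hK.intervalIntegrable_duhamel hat hg₂)]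
  refine intervalIntegral.integral_congr_ae ((Measure.ae_ne volume t).mono fun s hs hs' => ?_)
  rw [uIoc_of_le hat] at hs'
  exact (hK.map_sub _ (sub_pos.2 (lt_of_le_of_ne hs'.2 hs)) _ _).symm

theorem norm_duhamel_le {ℓ : ℝ → ℝ} (hK : IntegrableKernel W k) (hat : a ≤ t)
    (hℓ : ContinuousOn ℓ (Icc a t)) (hle : ∀ s ∈ Icc a t, ‖g s‖ ≤ ℓ s) :
    ‖duhamel W g a t‖ ≤ ∫ s in a..t, k (t - s) * ℓ s := by
  refine intervalIntegral.norm_integral_le_of_norm_le hat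
    ((Measure.ae_ne volume t).mono fun s hs hs' => ?_)
    ((intervalIntegrable_comp_sub_of_integrableOn hK.integrableOn hat).mul_continuousOn
      (by rwa [uIcc_of_le hat]))
  have hpos : 0 < t - s := sub_pos.2 (lt_of_le_of_ne hs'.2 hs)
  exact (hK.norm_le _ hpos _).trans
    (mul_le_mul_of_nonneg_left (hle s (Ioc_subset_Icc_self hs')) (hK.nonneg _ hpos))

/-- After the substitution `u = t - s` the integrand is dominated by `k u * sup ‖g‖` uniformly in
`t`, so dominated convergence applies. -/
theorem continuousOn_duhamel (hK : IntegrableKernel W k) (hg : ContinuousOn g (Icc a b)) :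
    ContinuousOn (duhamel W g a) (Icc a b) := by
  rcases lt_or_ge b a with hba | hab
  · simp [Icc_eq_empty_of_lt hba]
  set g' := IccExtend hab ((Icc a b).domRestrict g)
  have hg' : Continuous g' := hg.domRestrict.Icc_extend'
  obtain ⟨C, hC⟩ := isCompact_Icc.exists_bound_of_continuousOn hg
  set H : ℝ → ℝ → F := fun t => (Iic (t - a)).indicator fun u => W u (g' (t - u))
  have heq : EqOn (duhamel W g a) (fun t => ∫ u in 0..b - a, H t u) (Icc a b) := fun t ht => by
    rw [duhamel_congr ht.1 fun s hs => (IccExtend_of_mem hab ((Icc a b).domRestrict g)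
      ⟨hs.1, hs.2.trans ht.2⟩).symm, duhamel_eq_integral_indicator ht]
  have hIoc : Ι 0 (b - a) = Ioc 0 (b - a) := uIoc_of_le (by linarith)
  refine ContinuousOn.congr (fun t _ => ?_) heq
  refine intervalIntegral.continuousWithinAt_of_dominated_interval (bound := fun u => k u * C)
    (Eventually.of_forall fun t => ?_) (Eventually.of_forall fun t => ae_of_all _ fun u hu => ?_)
    ?_ ((Measure.ae_ne volume (t - a)).mono fun u hne hu => ?_)
  · rw [hIoc]
    refine (ContinuousOn.aestronglyMeasurable ?_ measurableSet_Ioc).indicator measurableSet_Iic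
    exact hK.continuousOn.comp ((hg'.comp (continuous_const.sub continuous_id)).continuousOn.prodMk
      continuousOn_id) fun u hu => ⟨trivial, hu.1⟩
  · rw [hIoc] at hu
    refine (norm_indicator_le_norm_self _ _).trans ((hK.norm_le _ hu.1 _).trans ?_)
    exact mul_le_mul_of_nonneg_left (hC _ (projIcc a b hab _).2) (hK.nonneg _ hu.1)
  · exact ((intervalIntegrable_iff_integrableOn_Ioc_of_le (by linarith)).2
      (hK.integrableOn _)).mul_const C
  · rw [hIoc] at hu
    have hWu : Continuous fun t => W u (g' (t - u)) :=
      hK.continuousOn.comp_continuous ((hg'.comp (continuous_id.sub continuous_const)).prodMk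
        continuous_const) fun _ => ⟨trivial, hu.1⟩
    refine ContinuousAt.continuousWithinAt ?_
    rcases hne.lt_or_gt with h | h
    · exact hWu.continuousAt.congr ((lt_mem_nhds (show u + a < t by linarith)).mono fun t' ht' =>
        by simp only [H, indicator_of_mem (show u ∈ Iic (t' - a) by simp; linarith)])
    · exact (continuousAt_const (y := (0 : F))).congr
        ((gt_mem_nhds (show t < u + a by linarith)).mono fun t' ht' =>
          by simp only [H, indicator_of_notMem (show u ∉ Iic (t' - a) by simp; linarith)])

theorem norm_duhamel_le_mul_exp (hK : IntegrableKernel W k) (hab : a ≤ b) {γ C : ℝ}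
    (hle : ∀ s ∈ Icc a b, ‖g s‖ ≤ C * Real.exp (γ * (s - a))) (ht : t ∈ Icc a b) :
    ‖duhamel W g a t‖ ≤
      C * Real.exp (γ * (t - a)) * ∫ u in 0..b - a, k u * Real.exp (-(γ * u)) := by
  have hC : 0 ≤ C := by simpa using (norm_nonneg _).trans (hle a ⟨le_rfl, hab⟩)
  calc ‖duhamel W g a t‖
      ≤ ∫ s in a..t, k (t - s) * (C * Real.exp (γ * (s - a))) :=
        hK.norm_duhamel_le ht.1 (by fun_prop) fun s hs => hle s ⟨hs.1, hs.2.trans ht.2⟩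
    _ = C * Real.exp (γ * (t - a)) * ∫ u in 0..t - a, k u * Real.exp (-(γ * u)) := by
        rw [integral_comp_sub_sub (fun u s => k u * (C * Real.exp (γ * (s - a)))),
          ← intervalIntegral.integral_const_mul]
        refine intervalIntegral.integral_congr fun u _ => ?_
        rw [show γ * (t - u - a) = γ * (t - a) + -(γ * u) by ring, Real.exp_add]
        ring
    _ ≤ C * Real.exp (γ * (t - a)) * ∫ u in 0..b - a, k u * Real.exp (-(γ * u)) := by
        refine mul_le_mul_of_nonneg_left (intervalIntegral.integral_mono_interval le_rfl
          (by linarith [ht.1]) (by linarith [ht.2]) (ae_restrict_of_forall_mem measurableSet_Ioc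
            fun u hu => mul_nonneg (hK.nonneg u hu.1) (Real.exp_pos _).le) ?_) (by positivity)
        exact ((intervalIntegrable_iff_integrableOn_Ioc_of_le (by linarith)).2
          (hK.integrableOn _)).mul_continuousOn (by fun_prop)

variable {P : F → ℝ → G} {v φ ψ φap : ℝ → F} {R ℓ : ℝ → ℝ}

theorem norm_picard_sub_le (hK : IntegrableKernel W k) (hat : a ≤ t)
    (hφ : ContinuousOn (fun s => P (φ s) s) (Icc a t))
    (hψ : ContinuousOn (fun s => P (ψ s) s) (Icc a t)) (hℓ : ContinuousOn ℓ (Icc a t))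
    (hle : ∀ s ∈ Icc a t, ‖P (φ s) s - P (ψ s) s‖ ≤ ℓ s) :
    ‖picard W P v a φ t - ψ t‖ ≤ ‖ψ t - picard W P v a ψ t‖ + ∫ s in a..t, k (t - s) * ℓ s := by
  have hsplit : picard W P v a φ t - ψ t =
      (duhamel W (fun s => P (φ s) s) a t - duhamel W (fun s => P (ψ s) s) a t) -
        (ψ t - picard W P v a ψ t) := by
    simp only [picard]; abel
  rw [hsplit, hK.duhamel_sub hat hφ hψ, add_comm]
  exact (norm_sub_le _ _).trans (add_le_add (hK.norm_duhamel_le hat hℓ hle) le_rfl)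

theorem norm_picard_sub_picard_le (hK : IntegrableKernel W k) (hab : a ≤ b) {γ L D : ℝ}
    (hφ : ContinuousOn (fun s => P (φ s) s) (Icc a b))
    (hψ : ContinuousOn (fun s => P (ψ s) s) (Icc a b)) (hL : 0 ≤ L)
    (hLip : ∀ s ∈ Icc a b, ‖P (φ s) s - P (ψ s) s‖ ≤ L * ‖φ s - ψ s‖)
    (hD : ∀ s ∈ Icc a b, ‖φ s - ψ s‖ ≤ D * Real.exp (γ * (s - a))) (ht : t ∈ Icc a b) :
    ‖picard W P v a φ t - picard W P v a ψ t‖ ≤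
      L * (∫ u in 0..b - a, k u * Real.exp (-(γ * u))) * D * Real.exp (γ * (t - a)) := by
  have hsub : Icc a t ⊆ Icc a b := Icc_subset_Icc_right ht.2
  rw [picard, picard, add_sub_add_left_eq_sub, hK.duhamel_sub ht.1 (hφ.mono hsub) (hψ.mono hsub)]
  refine (hK.norm_duhamel_le_mul_exp hab (C := L * D) (fun s hs => (hLip s hs).trans ?_)
    ht).trans_eq (by ring)
  rw [mul_assoc]
  exact mul_le_mul_of_nonneg_left (hD s hs) hL

theorem exists_unique_isTubeSolution [CompleteSpace F] (hK : IntegrableKernel W k)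
    (hab : a ≤ b) (hv : ContinuousOn v (Icc a b)) (hφap : ContinuousOn φap (Icc a b))
    (hR : ∀ s ∈ Icc a b, 0 ≤ R s) (hℓ : ContinuousOn ℓ (Icc a b)) {L M : ℝ}
    (hP : ∀ p ∈ tube φap R a b, ∀ q ∈ tube φap R a b,
      ‖P p.1 p.2 - P q.1 q.2‖ ≤ L * ‖p.1 - q.1‖ + M * |p.2 - q.2|)
    (hgrowth : ∀ s ∈ Icc a b, ∀ f ∈ Metric.closedBall (φap s) (R s),
      ‖P f s - P (φap s) s‖ ≤ ℓ s)
    (hctrl : ∀ t ∈ Icc a b,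
      ‖φap t - picard W P v a φap t‖ + ∫ s in a..t, k (t - s) * ℓ s ≤ R t) :
    (∃ φ, IsTubeSolution W P v a φap R b φ) ∧
      ∀ φ ψ, IsTubeSolution W P v a φap R b φ → IsTubeSolution W P v a φap R b ψ →
        EqOn φ ψ (Icc a b) := by
  set K := fun s => Metric.closedBall (φap s) (R s)
  have hPφ (φ) (hφ : IsContinuousSelectionOn K (Icc a b) φ) :
      ContinuousOn (fun s => P (φ s) s) (Icc a b) :=
    (continuousOn_of_norm_sub_le hP).comp (hφ.1.prodMk continuousOn_id)
      fun s hs => ⟨hs, hφ.2 s hs⟩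
  have hLip (φ ψ) (hφ : IsContinuousSelectionOn K (Icc a b) φ)
      (hψ : IsContinuousSelectionOn K (Icc a b) ψ) (s) (hs : s ∈ Icc a b) :
      ‖P (φ s) s - P (ψ s) s‖ ≤ |L| * ‖φ s - ψ s‖ := by
    have h := hP (φ s, s) ⟨hs, hφ.2 s hs⟩ (ψ s, s) ⟨hs, hψ.2 s hs⟩
    simp only [sub_self, abs_zero, mul_zero, add_zero] at h
    exact h.trans (mul_le_mul_of_nonneg_right (le_abs_self L) (norm_nonneg _))
  have hφap' : IsContinuousSelectionOn K (Icc a b) φap :=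
    ⟨hφap, fun s hs => Metric.mem_closedBall_self (hR s hs)⟩
  obtain ⟨γ, hJ, hγ⟩ := ((((tendsto_integral_mul_exp_neg_atTop (sub_nonneg.2 hab)
    (hK.integrableOn _)).const_mul |L|).eventually (gt_mem_nhds (by simp : |L| * 0 < 1))).and
    (eventually_ge_atTop 0)).exists
  have hJ0 : 0 ≤ ∫ u in 0..b - a, k u * Real.exp (-(γ * u)) := by
    rw [intervalIntegral.integral_of_le (sub_nonneg.2 hab)]
    exact setIntegral_nonneg measurableSet_Ioc fun u hu =>
      mul_nonneg (hK.nonneg u hu.1) (Real.exp_pos _).le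
  refine exists_unique_fixed_curve_of_weighted_contraction (Φ := picard W P v a) hab
    (fun s => Metric.isClosed_closedBall) ⟨φap, hφap'⟩
    (fun φ hφ => ⟨hv.add (hK.continuousOn_duhamel (hPφ φ hφ)), fun t ht => ?_⟩)
    (fun φ ψ => picard_congr) (w := fun s => Real.exp (γ * (s - a)))
    (B := Real.exp (γ * (b - a))) (by positivity) hJ
    (fun s hs => Real.one_le_exp (mul_nonneg hγ (sub_nonneg.2 hs.1)))
    (fun s hs => Real.exp_le_exp.2 (mul_le_mul_of_nonneg_left (by linarith [hs.2]) hγ))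
    fun φ ψ hφ hψ D hD t ht => hK.norm_picard_sub_picard_le hab (hPφ φ hφ) (hPφ ψ hψ)
      (abs_nonneg L) (hLip φ ψ hφ hψ) hD ht
  have hsub : Icc a t ⊆ Icc a b := Icc_subset_Icc_right ht.2
  rw [mem_closedBall_iff_norm]
  exact (hK.norm_picard_sub_le ht.1 ((hPφ φ hφ).mono hsub) ((hPφ φap hφap').mono hsub)
    (hℓ.mono hsub) fun s hs => hgrowth s (hsub hs) _ (hφ.2 s (hsub hs))).trans (hctrl t ht)

end IntegrableKernel

end Volterra

open Volterra

theorem stmt_0_general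
    {F Fm : Type*}
    [NormedAddCommGroup F] [NormedSpace ℝ F] [CompleteSpace F]
    [NormedAddCommGroup Fm] [NormedSpace ℝ Fm]
    -- F is a dense subspace of Fm, with continuous inclusion ι
    (ι : F →L[ℝ] Fm) (hι_inj : Function.Injective ι)
    -- the semigroup (e^{tA})_{t ≥ 0} on Fm, strongly continuous
    (U : ℝ → Fm →L[ℝ] Fm)
    -- e^{tA} maps F into F (lift V), giving a strongly continuous semigroup on F
    (V : ℝ → F → F)
    (hVcont : ContinuousOn (fun p : F × ℝ => V p.2 p.1) (univ ×ˢ Ici (0:ℝ)))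
    -- e^{tA} maps Fm into F for t > 0 (lift W), continuously on Fm × (0,∞)
    (W : ℝ → Fm → F)
    (hW : ∀ t > (0:ℝ), ∀ f : Fm, ι (W t f) = U t f)
    (hWcont : ContinuousOn (fun p : Fm × ℝ => W p.2 p.1) (univ ×ˢ Ioi (0:ℝ)))
    -- the estimator u₋ for the semigroup, with u₋(t) = O(1/t^{1-σ}) at 0⁺
    (um : ℝ → ℝ)
    (hum_cont : ContinuousOn um (Ioi (0:ℝ)))
    (hum_pos : ∀ t > (0:ℝ), 0 < um t)
    (hum_bd : ∀ t > (0:ℝ), ∀ f : Fm, ‖W t f‖ ≤ um t * ‖f‖)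
    (σ : ℝ) (hσ : σ ∈ Ioc (0:ℝ) 1)
    (hum_O : ∃ C : ℝ, ∃ δ > (0:ℝ), ∀ t ∈ Ioo (0:ℝ) δ, um t ≤ C / t ^ (1 - σ))
    -- the nonlinearity P, with semi-open domain, Lipschitz on closed bounded subsets
    (Dom : Set (F × ℝ)) (P : F → ℝ → Fm)
    (hPlip : ∀ C : Set (F × ℝ), IsClosed C → Bornology.IsBounded C → C ⊆ Dom →
      ∃ L M : ℝ, ∀ p ∈ C, ∀ q ∈ C,
        ‖P p.1 p.2 - P q.1 q.2‖ ≤ L * ‖p.1 - q.1‖ + M * |p.2 - q.2|)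
    -- datum and time interval I = [t₀, T), T ∈ (t₀, +∞]
    (t₀ : ℝ) (f₀ : F)
    (T : EReal)
    (I : Set ℝ) (hI : I = {t : ℝ | t₀ ≤ t ∧ (t : EReal) < T})
    -- the approximate solution φap, with graph in Dom
    (φap : ℝ → F) (hφap_cont : ContinuousOn φap I)
    -- integral error estimator EE
    (EE : ℝ → ℝ)
    (hEE : ∀ t ∈ I,
      ‖φap t - V (t - t₀) f₀ - ∫ s in t₀..t, W (t - s) (P (φap s) s)‖ ≤ EE t)
    -- growth estimator lg for P from φap, defined on the subgraph of ρ : I → (0,+∞]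
    (ρ : ℝ → ENNReal)
    (lg : ℝ → ℝ → ℝ)
    (hlg_cont : ContinuousOn (fun p : ℝ × ℝ => lg p.1 p.2)
      {p : ℝ × ℝ | p.2 ∈ I ∧ 0 ≤ p.1 ∧ ENNReal.ofReal p.1 < ρ p.2})
    (hlg_mono : ∀ t ∈ I, ∀ r r' : ℝ, 0 ≤ r → r ≤ r' → ENNReal.ofReal r' < ρ t →
      lg r t ≤ lg r' t)
    (htube : ∀ t ∈ I, ∀ f : F, ENNReal.ofReal ‖f - φap t‖ < ρ t → (f, t) ∈ Dom)
    (hgrowth : ∀ t ∈ I, ∀ f : F, ENNReal.ofReal ‖f - φap t‖ < ρ t →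
      ‖P f t - P (φap t) t‖ ≤ lg ‖f - φap t‖ t)
    -- the control function RR, solving the control inequality
    (RR : ℝ → ℝ) (hRR_cont : ContinuousOn RR I) (hRR_nonneg : ∀ t ∈ I, 0 ≤ RR t)
    (hRR_lt : ∀ t ∈ I, ENNReal.ofReal (RR t) < ρ t)
    (hctrl : ∀ t ∈ I, EE t + ∫ s in t₀..t, um (t - s) * lg (RR s) s ≤ RR t) :
    ∃ φ : ℝ → F, ContinuousOn φ I ∧ (∀ t ∈ I, (φ t, t) ∈ Dom) ∧
      (∀ t ∈ I, φ t = V (t - t₀) f₀ + ∫ s in t₀..t, W (t - s) (P (φ s) s)) ∧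
      ∀ t ∈ I, ‖φ t - φap t‖ ≤ RR t := by
  subst hI
  set I := {t : ℝ | t₀ ≤ t ∧ (t : EReal) < T}
  set v := fun t => V (t - t₀) f₀
  have hIcc : ∀ τ ∈ I, Icc t₀ τ ⊆ I := fun τ hτ s hs =>
    ⟨hs.1, (EReal.coe_le_coe_iff.2 hs.2).trans_lt hτ.2⟩
  obtain ⟨C, δ, hδ, hC⟩ := hum_O
  have hK : IntegrableKernel W um :=
    ⟨hWcont, fun u hu f g => hι_inj (by simp only [map_sub, hW u hu]), hum_bd,
      fun u hu => (hum_pos u hu).le,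
      integrableOn_Ioc_of_le_div_rpow hum_cont (fun t ht => (hum_pos t ht).le) hσ.1 hδ hC⟩
  have hv : ContinuousOn v (Ici t₀) := hVcont.comp
    (continuousOn_const.prodMk (continuousOn_id.sub continuousOn_const))
    fun t ht => ⟨trivial, show 0 ≤ t - t₀ from sub_nonneg.2 ht⟩
  have hℓ : ContinuousOn (fun s => lg (RR s) s) I := hlg_cont.comp
    (hRR_cont.prodMk continuousOn_id) fun s hs => ⟨hs, hRR_nonneg s hs, hRR_lt s hs⟩
  have hρ : ∀ s ∈ I, ∀ f ∈ Metric.closedBall (φap s) (RR s),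
      ENNReal.ofReal ‖f - φap s‖ < ρ s := fun s hs f hf =>
    (ENNReal.ofReal_le_ofReal (mem_closedBall_iff_norm.1 hf)).trans_lt (hRR_lt s hs)
  have hgrowth' : ∀ s ∈ I, ∀ f ∈ Metric.closedBall (φap s) (RR s),
      ‖P f s - P (φap s) s‖ ≤ lg (RR s) s := fun s hs f hf =>
    (hgrowth s hs f (hρ s hs f hf)).trans
      (hlg_mono s hs _ _ (norm_nonneg _) (mem_closedBall_iff_norm.1 hf) (hRR_lt s hs))
  have hctrl' : ∀ t ∈ I, ‖φap t - picard W P v t₀ φap t‖ +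
      ∫ s in t₀..t, um (t - s) * lg (RR s) s ≤ RR t := fun t ht =>
    (add_le_add (by simpa only [picard, duhamel, v, sub_add_eq_sub_sub] using hEE t ht)
      le_rfl).trans (hctrl t ht)
  have hloc : ∀ τ ∈ I, (∃ φ, IsTubeSolution W P v t₀ φap RR τ φ) ∧
      ∀ φ ψ, IsTubeSolution W P v t₀ φap RR τ φ → IsTubeSolution W P v t₀ φap RR τ ψ →
        EqOn φ ψ (Icc t₀ τ) := by
    intro τ hτ
    have hsub := hIcc τ hτ
    obtain ⟨L, M, hLM⟩ := hPlip _ (isClosed_tube (hφap_cont.mono hsub) (hRR_cont.mono hsub))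
      (isBounded_tube (hφap_cont.mono hsub) (hRR_cont.mono hsub))
      fun p hp => htube _ (hsub hp.1) _ (hρ _ (hsub hp.1) _ hp.2)
    exact hK.exists_unique_isTubeSolution hτ.1 (hv.mono fun s hs => hs.1)
      (hφap_cont.mono hsub) (fun s hs => hRR_nonneg s (hsub hs)) (hℓ.mono hsub) hLM
      (fun s hs => hgrowth' s (hsub hs)) fun t ht => hctrl' t (hsub ht)
  obtain ⟨φ, hφ⟩ := exists_forall_of_existsUnique_Icc hIcc (fun τ φ h τ' hτ' => h.mono hτ'.2)
    (fun τ φ ψ h he => h.congr he) hloc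
  have hmem : ∀ t ∈ I, t ∈ Icc t₀ t := fun t ht => ⟨ht.1, le_rfl⟩
  refine ⟨φ, continuousOn_of_forall_Icc fun τ hτ₀ hτT => (hφ τ ⟨hτ₀, hτT⟩).1.1,
    fun t ht => htube t ht _ (hρ t ht _ ((hφ t ht).1.2 t (hmem t ht))),
    fun t ht => ((hφ t ht).2 (hmem t ht)).symm,
    fun t ht => mem_closedBall_iff_norm.1 ((hφ t ht).1.2 t (hmem t ht))⟩

/-- Main theorem on approximate solutions of the abstract semilinear Volterra problem:
if the control inequality `ℰ(t) + ∫_{t₀}^t u₋(t−s) ℓ(ℛ(s),s) ds ≤ ℛ(t)` has a solution `ℛ`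
on `[t₀,T)` (with `ℛ(t) < ρ(t)`), then the Volterra problem `VP(f₀,t₀)` has an exact solution
`φ` on `[t₀,T)` with `‖φ(t) − φ_ap(t)‖ ≤ ℛ(t)` there. -/
theorem stmt_0
    {F Fm : Type*}
    [NormedAddCommGroup F] [NormedSpace ℝ F] [CompleteSpace F]
    [NormedAddCommGroup Fm] [NormedSpace ℝ Fm] [CompleteSpace Fm]
    -- F is a dense subspace of Fm, with continuous inclusion ι
    (ι : F →L[ℝ] Fm) (hι_inj : Function.Injective ι) (hι_dense : DenseRange ι)
    -- the semigroup (e^{tA})_{t ≥ 0} on Fm, strongly continuous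
    (U : ℝ → Fm →L[ℝ] Fm)
    (hU0 : U 0 = ContinuousLinearMap.id ℝ Fm)
    (hUsem : ∀ s ≥ (0:ℝ), ∀ t ≥ (0:ℝ), U (s + t) = (U s).comp (U t))
    (hUsc : ∀ f : Fm, ContinuousOn (fun t => U t f) (Ici (0:ℝ)))
    -- e^{tA} maps F into F (lift V), giving a strongly continuous semigroup on F
    (V : ℝ → F → F)
    (hV : ∀ t ≥ (0:ℝ), ∀ x : F, ι (V t x) = U t (ι x))
    (hVcont : ContinuousOn (fun p : F × ℝ => V p.2 p.1) (univ ×ˢ Ici (0:ℝ)))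
    -- e^{tA} maps Fm into F for t > 0 (lift W), continuously on Fm × (0,∞)
    (W : ℝ → Fm → F)
    (hW : ∀ t > (0:ℝ), ∀ f : Fm, ι (W t f) = U t f)
    (hWcont : ContinuousOn (fun p : Fm × ℝ => W p.2 p.1) (univ ×ˢ Ioi (0:ℝ)))
    -- the estimator u₋ for the semigroup, with u₋(t) = O(1/t^{1-σ}) at 0⁺
    (um : ℝ → ℝ)
    (hum_cont : ContinuousOn um (Ioi (0:ℝ)))
    (hum_pos : ∀ t > (0:ℝ), 0 < um t)
    (hum_bd : ∀ t > (0:ℝ), ∀ f : Fm, ‖W t f‖ ≤ um t * ‖f‖)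
    (σ : ℝ) (hσ : σ ∈ Ioc (0:ℝ) 1)
    (hum_O : ∃ C : ℝ, ∃ δ > (0:ℝ), ∀ t ∈ Ioo (0:ℝ) δ, um t ≤ C / t ^ (1 - σ))
    -- the nonlinearity P, with semi-open domain, Lipschitz on closed bounded subsets
    (Dom : Set (F × ℝ)) (P : F → ℝ → Fm)
    (hDom : ∀ p ∈ Dom, ∃ δ > (0:ℝ), ∃ r > (0:ℝ),
      ∀ f : F, ‖f - p.1‖ < r → ∀ t ∈ Ico p.2 (p.2 + δ), (f, t) ∈ Dom)
    (hPlip : ∀ C : Set (F × ℝ), IsClosed C → Bornology.IsBounded C → C ⊆ Dom →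
      ∃ L M : ℝ, ∀ p ∈ C, ∀ q ∈ C,
        ‖P p.1 p.2 - P q.1 q.2‖ ≤ L * ‖p.1 - q.1‖ + M * |p.2 - q.2|)
    -- datum and time interval I = [t₀, T), T ∈ (t₀, +∞]
    (t₀ : ℝ) (f₀ : F) (hf₀ : (f₀, t₀) ∈ Dom)
    (T : EReal) (hT : (t₀ : EReal) < T)
    (I : Set ℝ) (hI : I = {t : ℝ | t₀ ≤ t ∧ (t : EReal) < T})
    -- the approximate solution φap, with graph in Dom
    (φap : ℝ → F) (hφap_cont : ContinuousOn φap I)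
    (hφap_dom : ∀ t ∈ I, (φap t, t) ∈ Dom)
    -- integral error estimator EE
    (EE : ℝ → ℝ) (hEE_cont : ContinuousOn EE I) (hEE_nonneg : ∀ t ∈ I, 0 ≤ EE t)
    (hEE : ∀ t ∈ I,
      ‖φap t - V (t - t₀) f₀ - ∫ s in t₀..t, W (t - s) (P (φap s) s)‖ ≤ EE t)
    -- growth estimator lg for P from φap, defined on the subgraph of ρ : I → (0,+∞]
    (ρ : ℝ → ENNReal) (hρ_cont : ContinuousOn ρ I) (hρ_pos : ∀ t ∈ I, 0 < ρ t)
    (lg : ℝ → ℝ → ℝ)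
    (hlg_cont : ContinuousOn (fun p : ℝ × ℝ => lg p.1 p.2)
      {p : ℝ × ℝ | p.2 ∈ I ∧ 0 ≤ p.1 ∧ ENNReal.ofReal p.1 < ρ p.2})
    (hlg_nonneg : ∀ t ∈ I, ∀ r : ℝ, 0 ≤ r → ENNReal.ofReal r < ρ t → 0 ≤ lg r t)
    (hlg_mono : ∀ t ∈ I, ∀ r r' : ℝ, 0 ≤ r → r ≤ r' → ENNReal.ofReal r' < ρ t →
      lg r t ≤ lg r' t)
    (htube : ∀ t ∈ I, ∀ f : F, ENNReal.ofReal ‖f - φap t‖ < ρ t → (f, t) ∈ Dom)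
    (hgrowth : ∀ t ∈ I, ∀ f : F, ENNReal.ofReal ‖f - φap t‖ < ρ t →
      ‖P f t - P (φap t) t‖ ≤ lg ‖f - φap t‖ t)
    -- the control function RR, solving the control inequality
    (RR : ℝ → ℝ) (hRR_cont : ContinuousOn RR I) (hRR_nonneg : ∀ t ∈ I, 0 ≤ RR t)
    (hRR_lt : ∀ t ∈ I, ENNReal.ofReal (RR t) < ρ t)
    (hctrl : ∀ t ∈ I, EE t + ∫ s in t₀..t, um (t - s) * lg (RR s) s ≤ RR t) :
    ∃ φ : ℝ → F, ContinuousOn φ I ∧ (∀ t ∈ I, (φ t, t) ∈ Dom) ∧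
      (∀ t ∈ I, φ t = V (t - t₀) f₀ + ∫ s in t₀..t, W (t - s) (P (φ s) s)) ∧
      ∀ t ∈ I, ‖φ t - φap t‖ ≤ RR t :=
  stmt_0_general ι hι_inj U V hVcont W hW hWcont um hum_cont hum_pos hum_bd σ hσ hum_O Dom P hPlip
    t₀ f₀ T I hI φap hφap_cont EE hEE ρ lg hlg_cont hlg_mono htube hgrowth RR hRR_cont hRR_nonneg
    hRR_lt hctrl
end

section
/- If (f₀,t₀) ∈ Dom P and φ ∈ C([t₀,T),F), φ' ∈ C([t₀,T'),F) are two solutions of the Volterra problem VP(f₀,t₀), then φ(t) = φ'(t) for all t ∈ [t₀, min(T,T')). -/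
open Set MeasureTheory Filter Topology

/-!
On `[t₀, t]` both graphs lie in a compact subset of `Dom P`, on which `P` is Lipschitz, so
`d = ‖φ - ψ‖` satisfies the Volterra inequality `d t ≤ ∫ₜ₀ᵗ L |u₋ (t - s)| d s`, whose kernel is
integrable at `0` because `u₋ (r) = O(r^(σ-1))`. Such an inequality forces `d = 0`: just past the
last point up to which `d` vanishes, the kernel has mass `θ < 1` on a short interval, so the
maximum `m` of `d` there satisfies `m ≤ θ m`.
-/

theorem IntervalIntegrable.comp_sub_left_mul_continuousOn {k d : ℝ → ℝ} {a t : ℝ}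
    (hk : IntervalIntegrable k volume 0 (t - a)) (hd : ContinuousOn d (Icc a t)) (hat : a ≤ t) :
    IntervalIntegrable (fun s => k (t - s) * d s) volume a t := by
  have hks : IntervalIntegrable (fun s => k (t - s)) volume a t := by
    simpa using (hk.comp_sub_left t).symm
  exact hks.mul_continuousOn (by rwa [uIcc_of_le hat])

theorem exists_pos_forall_intervalIntegral_lt {k : ℝ → ℝ} {c η : ℝ}
    (hk : IntervalIntegrable k volume 0 c) (hc : 0 < c) (hη : 0 < η) :
    ∃ ε > 0, ∀ r ∈ Icc 0 ε, ∫ s in 0..r, k s < η := by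
  have hcont : ContinuousWithinAt (fun r => ∫ s in 0..r, k s) (Icc 0 c) 0 := by
    have h := intervalIntegral.continuousOn_primitive_interval' hk left_mem_uIcc
    rw [uIcc_of_le hc.le] at h
    exact h 0 (left_mem_Icc.2 hc.le)
  have hev : ∀ᶠ r in 𝓝[≥] 0, ∫ s in 0..r, k s < η := by
    rw [← nhdsWithin_Icc_eq_nhdsGE hc]
    exact hcont.tendsto.eventually_lt_const (by simpa using hη)
  exact mem_nhdsGE_iff_exists_Icc_subset.1 hev

theorem intervalIntegrable_of_le_div_rpow {u : ℝ → ℝ} {C δ σ c : ℝ} (hu : ContinuousOn u (Ioi 0))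
    (hu_nonneg : ∀ t > 0, 0 ≤ u t) (hσ : 0 < σ) (hδ : 0 < δ)
    (hC : ∀ t ∈ Ioo 0 δ, u t ≤ C / t ^ (1 - σ)) (hc : 0 ≤ c) :
    IntervalIntegrable u volume 0 c := by
  rcases hc.eq_or_lt with rfl | hc
  · exact .refl
  set c' := min c (δ / 2)
  have hc' : 0 < c' := lt_min hc (by linarith)
  have hnear : IntervalIntegrable u volume 0 c' := by
    refine ((intervalIntegral.intervalIntegrable_rpow' (r := σ - 1) (by linarith)).const_mul
      C).mono_fun ?_ ?_ <;> rw [uIoc_of_le hc'.le]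
    · exact (hu.mono fun t ht => ht.1).aestronglyMeasurable measurableSet_Ioc
    refine ae_restrict_of_forall_mem measurableSet_Ioc fun t ht => ?_
    calc ‖u t‖ = u t := Real.norm_of_nonneg (hu_nonneg t ht.1)
      _ ≤ C / t ^ (1 - σ) := hC t ⟨ht.1, by linarith [ht.2, min_le_right c (δ / 2)]⟩
      _ = C * t ^ (σ - 1) := by rw [div_eq_mul_inv, ← Real.rpow_neg ht.1.le, neg_sub]
      _ ≤ ‖C * t ^ (σ - 1)‖ := Real.le_norm_self _
  have hfar : IntervalIntegrable u volume c' c :=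
    (hu.mono fun t ht => hc'.trans_le ht.1).intervalIntegrable_of_Icc (min_le_left _ _)
  exact hnear.trans hfar

section VolterraInequality

variable {k d : ℝ → ℝ} {a b : ℝ}

theorem eqOn_zero_of_le_integral_kernel_mul_of_mass_lt_one
    (hk : IntervalIntegrable k volume 0 (b - a)) (hk_nonneg : ∀ r ∈ Ioo 0 (b - a), 0 ≤ k r)
    (hd : ContinuousOn d (Icc a b)) (hd_nonneg : ∀ t ∈ Icc a b, 0 ≤ d t)
    (hle : ∀ t ∈ Icc a b, d t ≤ ∫ s in a..t, k (t - s) * d s)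
    {x y : ℝ} (hax : a ≤ x) (hxy : x ≤ y) (hyb : y ≤ b) (hzero : ∀ s ∈ Ico a x, d s = 0)
    (hsmall : ∀ r ∈ Icc 0 (y - x), ∫ s in 0..r, k s < 1) :
    EqOn d 0 (Icc x y) := by
  have hsub : Icc x y ⊆ Icc a b := Icc_subset_Icc hax hyb
  obtain ⟨tm, htm, hmax⟩ :=
    isCompact_Icc.exists_isMaxOn (nonempty_Icc.2 hxy) (hd.mono hsub)
  have hat : a ≤ tm := hax.trans htm.1
  have hk' : IntervalIntegrable k volume 0 (tm - a) :=
    hk.mono_set (uIcc_subset_uIcc_left (mem_uIcc_of_le (by linarith) (by linarith [htm.2])))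
  have hI :=
    hk'.comp_sub_left_mul_continuousOn (hd.mono (Icc_subset_Icc le_rfl (htm.2.trans hyb))) hat
  have hIx : IntervalIntegrable (fun s => k (tm - s) * d s) volume x tm :=
    hI.mono_set (by rw [uIcc_of_le htm.1, uIcc_of_le hat]; exact Icc_subset_Icc hax le_rfl)
  have hIax : IntervalIntegrable (fun s => k (tm - s) * d s) volume a x :=
    hI.mono_set (by rw [uIcc_of_le hax, uIcc_of_le hat]; exact Icc_subset_Icc le_rfl htm.1)
  have hleft : ∫ s in a..x, k (tm - s) * d s = 0 := by
    refine intervalIntegral.integral_zero_ae ?_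
    filter_upwards [Measure.ae_ne volume x] with s hsx hs
    rw [uIoc_of_le hax] at hs
    rw [hzero s ⟨hs.1.le, hs.2.lt_of_ne hsx⟩, mul_zero]
  have hbound : ∫ s in x..tm, k (tm - s) * d s ≤ ∫ s in x..tm, k (tm - s) * d tm := by
    refine intervalIntegral.integral_mono_on_of_le_Ioo htm.1 hIx
      ((hk'.mono_set (uIcc_subset_uIcc_left (mem_uIcc_of_le (by linarith [htm.1]) (by linarith))))
        |>.comp_sub_left_mul_continuousOn continuousOn_const htm.1) fun s hs => ?_
    exact mul_le_mul_of_nonneg_left (hmax ⟨hs.1.le, hs.2.le.trans htm.2⟩)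
      (hk_nonneg _ ⟨by linarith [hs.2], by linarith [hs.1, htm.2]⟩)
  have hmass : ∫ s in x..tm, k (tm - s) * d tm = (∫ r in 0..(tm - x), k r) * d tm := by
    rw [intervalIntegral.integral_mul_const, intervalIntegral.integral_comp_sub_left, sub_self]
  have hm : d tm ≤ (∫ r in 0..(tm - x), k r) * d tm := by
    calc d tm ≤ ∫ s in a..tm, k (tm - s) * d s := hle tm (hsub htm)
      _ = ∫ s in x..tm, k (tm - s) * d s := by
        rw [← intervalIntegral.integral_add_adjacent_intervals hIax hIx, hleft, zero_add]
      _ ≤ _ := hbound.trans hmass.le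
  have hθ := hsmall (tm - x) ⟨by linarith [htm.1], by linarith [htm.2]⟩
  have hm0 : d tm ≤ 0 := by nlinarith [hd_nonneg tm (hsub htm)]
  exact fun s hs => le_antisymm ((hmax hs).trans hm0) (hd_nonneg s (hsub hs))

theorem eqOn_zero_of_le_integral_kernel_mul
    (hk : IntervalIntegrable k volume 0 (b - a)) (hk_nonneg : ∀ r ∈ Ioo 0 (b - a), 0 ≤ k r)
    (hd : ContinuousOn d (Icc a b)) (hd_nonneg : ∀ t ∈ Icc a b, 0 ≤ d t)
    (hle : ∀ t ∈ Icc a b, d t ≤ ∫ s in a..t, k (t - s) * d s) :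
    EqOn d 0 (Icc a b) := by
  have hstep := @eqOn_zero_of_le_integral_kernel_mul_of_mass_lt_one k d a b hk hk_nonneg hd
    hd_nonneg hle
  set S := {x | ∀ s ∈ Ico a x, d s = 0}
  have hS : IsClosed S := by
    have hS_eq : S = ⋂ s ∈ {s | a ≤ s ∧ d s ≠ 0}, Iic s := by
      ext x
      simp only [S, mem_iInter, mem_Iic, mem_ofPred_eq, mem_Ico, and_imp, ← not_lt, ne_eq,
        not_imp_not]
    exact hS_eq ▸ isClosed_biInter fun _ _ => isClosed_Iic
  have hIcc : Icc a b ⊆ S := by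
    refine (hS.inter isClosed_Icc).Icc_subset_of_forall_exists_gt
      (fun s hs => absurd hs.2 (not_lt.2 hs.1)) ?_
    rintro x ⟨hxS, hax, hxb⟩ y hxy
    obtain ⟨ε, hε, hsmall⟩ := exists_pos_forall_intervalIntegral_lt hk (by linarith) one_pos
    set z := min y (min (x + ε) b)
    have hxz : x < z := lt_min hxy (lt_min (by linarith) hxb)
    have hzb : z ≤ b := (min_le_right _ _).trans (min_le_right _ _)
    have hzε : z - x ≤ ε := by linarith [(min_le_right y _).trans (min_le_left (x + ε) b)]
    have hzero := hstep hax hxz.le hzb hxS fun r hr => hsmall r ⟨hr.1, hr.2.trans hzε⟩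
    refine ⟨z, fun s hs => ?_, hxz, min_le_left _ _⟩
    rcases lt_or_ge s x with h | h
    · exact hxS s ⟨hs.1, h⟩
    · exact hzero ⟨h, hs.2.le⟩
  -- the step on the degenerate interval `[t, t]`, where the kernel has mass `0`
  intro t ht
  refine hstep ht.1 le_rfl ht.2 (hIcc ht) (fun r hr => ?_) ⟨le_rfl, le_rfl⟩
  rw [sub_self] at hr
  simp [le_antisymm hr.2 hr.1]

end VolterraInequality

section Volterra

variable {F Fm : Type*} [NormedAddCommGroup F] [NormedAddCommGroup Fm] {W : ℝ → Fm → F}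
  {u : ℝ → ℝ}

theorem intervalIntegrable_kernel_apply
    (hWcont : ContinuousOn (fun p : Fm × ℝ => W p.2 p.1) (univ ×ˢ Ioi 0))
    (hu_bd : ∀ t > 0, ∀ f, ‖W t f‖ ≤ u t * ‖f‖) {a t : ℝ} (hat : a ≤ t)
    (hu : IntervalIntegrable u volume 0 (t - a)) {g : ℝ → Fm} (hg : ContinuousOn g (Icc a t)) :
    IntervalIntegrable (fun s => W (t - s) (g s)) volume a t := by
  have hcont : ContinuousOn (fun s => W (t - s) (g s)) (Ico a t) :=
    hWcont.comp ((hg.mono Ico_subset_Icc_self).prodMk (continuousOn_const.sub continuousOn_id))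
      fun s hs => ⟨mem_univ _, sub_pos.2 hs.2⟩
  refine (hu.comp_sub_left_mul_continuousOn hg.norm hat).mono_fun ?_ ?_ <;>
    rw [uIoc_of_le hat, ← Measure.restrict_congr_set Ioo_ae_eq_Ioc]
  · exact (hcont.mono Ioo_subset_Ico_self).aestronglyMeasurable measurableSet_Ioo
  · exact ae_restrict_of_forall_mem measurableSet_Ioo fun s hs =>
      (hu_bd _ (sub_pos.2 hs.2) _).trans (Real.le_norm_self _)

theorem eqOn_of_volterra_integral_eq [NormedSpace ℝ F]
    (hW_sub : ∀ t > 0, ∀ f g, W t (f - g) = W t f - W t g)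
    (hWcont : ContinuousOn (fun p : Fm × ℝ => W p.2 p.1) (univ ×ˢ Ioi 0))
    (hu_bd : ∀ t > 0, ∀ f, ‖W t f‖ ≤ u t * ‖f‖) {a b L : ℝ}
    (hu : IntervalIntegrable u volume 0 (b - a)) {φ ψ v : ℝ → F} {p q : ℝ → Fm}
    (hφ : ContinuousOn φ (Icc a b)) (hψ : ContinuousOn ψ (Icc a b))
    (hp : ContinuousOn p (Icc a b)) (hq : ContinuousOn q (Icc a b))
    (hL : 0 ≤ L) (hpq : ∀ s ∈ Icc a b, ‖p s - q s‖ ≤ L * ‖φ s - ψ s‖)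
    (hφ_eq : ∀ t ∈ Icc a b, φ t = v t + ∫ s in a..t, W (t - s) (p s))
    (hψ_eq : ∀ t ∈ Icc a b, ψ t = v t + ∫ s in a..t, W (t - s) (q s)) :
    EqOn φ ψ (Icc a b) := by
  have hle : ∀ t ∈ Icc a b,
      ‖φ t - ψ t‖ ≤ ∫ s in a..t, L * |u (t - s)| * ‖φ s - ψ s‖ := by
    intro t ht
    have hsub : Icc a t ⊆ Icc a b := Icc_subset_Icc le_rfl ht.2
    have hut : IntervalIntegrable u volume 0 (t - a) :=
      hu.mono_set (uIcc_subset_uIcc_left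
        (mem_uIcc_of_le (by linarith [ht.1]) (by linarith [ht.2])))
    rw [hφ_eq t ht, hψ_eq t ht, add_sub_add_left_eq_sub, ← intervalIntegral.integral_sub
      (intervalIntegrable_kernel_apply hWcont hu_bd ht.1 hut (hp.mono hsub))
      (intervalIntegrable_kernel_apply hWcont hu_bd ht.1 hut (hq.mono hsub))]
    refine intervalIntegral.norm_integral_le_of_norm_le ht.1 ?_
      ((hut.abs.const_mul L).comp_sub_left_mul_continuousOn ((hφ.sub hψ).norm.mono hsub) ht.1)
    filter_upwards [Measure.ae_ne volume t] with s hst hs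
    have hts : 0 < t - s := sub_pos.2 (hs.2.lt_of_ne hst)
    calc ‖W (t - s) (p s) - W (t - s) (q s)‖ = ‖W (t - s) (p s - q s)‖ := by rw [hW_sub _ hts]
      _ ≤ |u (t - s)| * (L * ‖φ s - ψ s‖) :=
        (hu_bd _ hts _).trans (mul_le_mul (le_abs_self _) (hpq s ⟨hs.1.le, hs.2.trans ht.2⟩)
          (norm_nonneg _) (abs_nonneg _))
      _ = L * |u (t - s)| * ‖φ s - ψ s‖ := by ring
  intro t ht
  have hzero := eqOn_zero_of_le_integral_kernel_mul (k := fun r => L * |u r|)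
    (d := fun s => ‖φ s - ψ s‖) (hu.abs.const_mul L) (fun _ _ => by positivity)
    (hφ.sub hψ).norm (fun _ _ => norm_nonneg _) hle ht
  exact sub_eq_zero.1 (norm_eq_zero.1 hzero)

end Volterra

theorem lipschitzOnWith_of_norm_sub_le {F E : Type*} [SeminormedAddCommGroup F]
    [SeminormedAddCommGroup E] {P : F → ℝ → E} {K : Set (F × ℝ)} {L M : ℝ}
    (h : ∀ p ∈ K, ∀ q ∈ K, ‖P p.1 p.2 - P q.1 q.2‖ ≤ L * ‖p.1 - q.1‖ + M * |p.2 - q.2|) :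
    LipschitzOnWith (|L| + |M|).toNNReal (fun p : F × ℝ => P p.1 p.2) K := by
  refine LipschitzOnWith.of_dist_le' fun p hp q hq => ?_
  rw [dist_eq_norm, dist_eq_norm]
  calc ‖P p.1 p.2 - P q.1 q.2‖ ≤ L * ‖p.1 - q.1‖ + M * |p.2 - q.2| := h p hp q hq
    _ ≤ |L| * ‖p - q‖ + |M| * ‖p - q‖ := add_le_add
      ((mul_le_mul_of_nonneg_right (le_abs_self L) (norm_nonneg _)).trans
        (mul_le_mul_of_nonneg_left (norm_fst_le (p - q)) (abs_nonneg L)))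
      ((mul_le_mul_of_nonneg_right (le_abs_self M) (abs_nonneg _)).trans
        (mul_le_mul_of_nonneg_left (norm_snd_le (p - q)) (abs_nonneg M)))
    _ = (|L| + |M|) * ‖p - q‖ := by ring

theorem continuousOn_and_exists_norm_sub_le_of_isCompact {F E : Type*} [NormedAddCommGroup F]
    [SeminormedAddCommGroup E] {P : F → ℝ → E} {D K : Set (F × ℝ)}
    (hP : ∀ C : Set (F × ℝ), IsClosed C → Bornology.IsBounded C → C ⊆ D →
      ∃ L M : ℝ, ∀ p ∈ C, ∀ q ∈ C, ‖P p.1 p.2 - P q.1 q.2‖ ≤ L * ‖p.1 - q.1‖ + M * |p.2 - q.2|)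
    (hK : IsCompact K) (hKD : K ⊆ D) :
    ContinuousOn (fun p : F × ℝ => P p.1 p.2) K ∧
      ∃ L ≥ 0, ∀ f g t, (f, t) ∈ K → (g, t) ∈ K → ‖P f t - P g t‖ ≤ L * ‖f - g‖ := by
  obtain ⟨L, M, hLM⟩ := hP K hK.isClosed hK.isBounded hKD
  refine ⟨(lipschitzOnWith_of_norm_sub_le hLM).continuousOn, |L|, abs_nonneg L,
    fun f g t hf hg => ?_⟩
  calc ‖P f t - P g t‖ ≤ L * ‖f - g‖ + M * |t - t| := hLM _ hf _ hg
    _ ≤ |L| * ‖f - g‖ := by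
      rw [sub_self, abs_zero, mul_zero, add_zero]
      exact mul_le_mul_of_nonneg_right (le_abs_self L) (norm_nonneg _)

theorem stmt_1_general
    {F Fm : Type*}
    [NormedAddCommGroup F] [NormedSpace ℝ F]
    [NormedAddCommGroup Fm] [NormedSpace ℝ Fm]
    -- F is a dense subspace of Fm, with continuous inclusion ι
    (ι : F →L[ℝ] Fm) (hι_inj : Function.Injective ι)
    -- the semigroup (e^{tA})_{t ≥ 0} on Fm, strongly continuous
    (U : ℝ → Fm →L[ℝ] Fm)
    -- e^{tA} maps F into F (lift V), giving a strongly continuous semigroup on F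
    (V : ℝ → F → F)
    -- e^{tA} maps Fm into F for t > 0 (lift W), continuously on Fm × (0,∞)
    (W : ℝ → Fm → F)
    (hW : ∀ t > (0:ℝ), ∀ f : Fm, ι (W t f) = U t f)
    (hWcont : ContinuousOn (fun p : Fm × ℝ => W p.2 p.1) (univ ×ˢ Ioi (0:ℝ)))
    -- the estimator u₋ for the semigroup, with u₋(t) = O(1/t^{1-σ}) at 0⁺
    (um : ℝ → ℝ)
    (hum_cont : ContinuousOn um (Ioi (0:ℝ)))
    (hum_pos : ∀ t > (0:ℝ), 0 < um t)
    (hum_bd : ∀ t > (0:ℝ), ∀ f : Fm, ‖W t f‖ ≤ um t * ‖f‖)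
    (σ : ℝ) (hσ : σ ∈ Ioc (0:ℝ) 1)
    (hum_O : ∃ C : ℝ, ∃ δ > (0:ℝ), ∀ t ∈ Ioo (0:ℝ) δ, um t ≤ C / t ^ (1 - σ))
    -- the nonlinearity P, with semi-open domain, Lipschitz on closed bounded subsets
    (Dom : Set (F × ℝ)) (P : F → ℝ → Fm)
    (hPlip : ∀ C : Set (F × ℝ), IsClosed C → Bornology.IsBounded C → C ⊆ Dom →
      ∃ L M : ℝ, ∀ p ∈ C, ∀ q ∈ C,
        ‖P p.1 p.2 - P q.1 q.2‖ ≤ L * ‖p.1 - q.1‖ + M * |p.2 - q.2|)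
    -- datum
    (t₀ : ℝ) (f₀ : F)
    (T T' : EReal)
    -- φ is a solution of VP(f₀,t₀) on [t₀,T)
    (φ : ℝ → F)
    (hφ_cont : ContinuousOn φ {t : ℝ | t₀ ≤ t ∧ (t : EReal) < T})
    (hφ_dom : ∀ t : ℝ, t₀ ≤ t → (t : EReal) < T → (φ t, t) ∈ Dom)
    (hφ_eq : ∀ t : ℝ, t₀ ≤ t → (t : EReal) < T →
      φ t = V (t - t₀) f₀ + ∫ s in t₀..t, W (t - s) (P (φ s) s))
    -- ψ is a solution of VP(f₀,t₀) on [t₀,T')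
    (ψ : ℝ → F)
    (hψ_cont : ContinuousOn ψ {t : ℝ | t₀ ≤ t ∧ (t : EReal) < T'})
    (hψ_dom : ∀ t : ℝ, t₀ ≤ t → (t : EReal) < T' → (ψ t, t) ∈ Dom)
    (hψ_eq : ∀ t : ℝ, t₀ ≤ t → (t : EReal) < T' →
      ψ t = V (t - t₀) f₀ + ∫ s in t₀..t, W (t - s) (P (ψ s) s)) :
    ∀ t : ℝ, t₀ ≤ t → (t : EReal) < min T T' → φ t = ψ t := by
  obtain ⟨C, δ, hδ, hC⟩ := hum_O
  intro t ht₀ ht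
  have hTt : ∀ s ∈ Icc t₀ t, (s : EReal) < T := fun s hs =>
    (EReal.coe_le_coe_iff.2 hs.2).trans_lt (lt_min_iff.1 ht).1
  have hT't : ∀ s ∈ Icc t₀ t, (s : EReal) < T' := fun s hs =>
    (EReal.coe_le_coe_iff.2 hs.2).trans_lt (lt_min_iff.1 ht).2
  have hφc : ContinuousOn φ (Icc t₀ t) := hφ_cont.mono fun s hs => ⟨hs.1, hTt s hs⟩
  have hψc : ContinuousOn ψ (Icc t₀ t) := hψ_cont.mono fun s hs => ⟨hs.1, hT't s hs⟩
  set K := (fun s => (φ s, s)) '' Icc t₀ t ∪ (fun s => (ψ s, s)) '' Icc t₀ t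
  have hK : IsCompact K :=
    (isCompact_Icc.image_of_continuousOn (hφc.prodMk continuousOn_id)).union
      (isCompact_Icc.image_of_continuousOn (hψc.prodMk continuousOn_id))
  obtain ⟨hPK, L, hL, hLf⟩ := continuousOn_and_exists_norm_sub_le_of_isCompact hPlip hK <| by
    rintro _ (⟨s, hs, rfl⟩ | ⟨s, hs, rfl⟩)
    exacts [hφ_dom s hs.1 (hTt s hs), hψ_dom s hs.1 (hT't s hs)]
  refine eqOn_of_volterra_integral_eq (u := um) (fun s hs f g => hι_inj (by simp [hW s hs]))
    hWcont hum_bd (intervalIntegrable_of_le_div_rpow hum_cont (fun s hs => (hum_pos s hs).le)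
      hσ.1 hδ hC (sub_nonneg.2 ht₀)) hφc hψc
    (hPK.comp (hφc.prodMk continuousOn_id) fun s hs => Or.inl ⟨s, hs, rfl⟩)
    (hPK.comp (hψc.prodMk continuousOn_id) fun s hs => Or.inr ⟨s, hs, rfl⟩) hL
    (fun s hs => hLf _ _ _ (Or.inl ⟨s, hs, rfl⟩) (Or.inr ⟨s, hs, rfl⟩))
    (fun s hs => hφ_eq s hs.1 (hTt s hs)) (fun s hs => hψ_eq s hs.1 (hT't s hs)) ⟨ht₀, le_rfl⟩

/-- Uniqueness for the abstract semilinear Volterra problem: two solutions of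
`VP(f₀,t₀)` on `[t₀,T)` and `[t₀,T')` coincide on `[t₀, min(T,T'))`. -/
theorem stmt_1
    {F Fm : Type*}
    [NormedAddCommGroup F] [NormedSpace ℝ F] [CompleteSpace F]
    [NormedAddCommGroup Fm] [NormedSpace ℝ Fm] [CompleteSpace Fm]
    -- F is a dense subspace of Fm, with continuous inclusion ι
    (ι : F →L[ℝ] Fm) (hι_inj : Function.Injective ι) (hι_dense : DenseRange ι)
    -- the semigroup (e^{tA})_{t ≥ 0} on Fm, strongly continuous
    (U : ℝ → Fm →L[ℝ] Fm)
    (hU0 : U 0 = ContinuousLinearMap.id ℝ Fm)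
    (hUsem : ∀ s ≥ (0:ℝ), ∀ t ≥ (0:ℝ), U (s + t) = (U s).comp (U t))
    (hUsc : ∀ f : Fm, ContinuousOn (fun t => U t f) (Ici (0:ℝ)))
    -- e^{tA} maps F into F (lift V), giving a strongly continuous semigroup on F
    (V : ℝ → F → F)
    (hV : ∀ t ≥ (0:ℝ), ∀ x : F, ι (V t x) = U t (ι x))
    (hVcont : ContinuousOn (fun p : F × ℝ => V p.2 p.1) (univ ×ˢ Ici (0:ℝ)))
    -- e^{tA} maps Fm into F for t > 0 (lift W), continuously on Fm × (0,∞)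
    (W : ℝ → Fm → F)
    (hW : ∀ t > (0:ℝ), ∀ f : Fm, ι (W t f) = U t f)
    (hWcont : ContinuousOn (fun p : Fm × ℝ => W p.2 p.1) (univ ×ˢ Ioi (0:ℝ)))
    -- the estimator u₋ for the semigroup, with u₋(t) = O(1/t^{1-σ}) at 0⁺
    (um : ℝ → ℝ)
    (hum_cont : ContinuousOn um (Ioi (0:ℝ)))
    (hum_pos : ∀ t > (0:ℝ), 0 < um t)
    (hum_bd : ∀ t > (0:ℝ), ∀ f : Fm, ‖W t f‖ ≤ um t * ‖f‖)
    (σ : ℝ) (hσ : σ ∈ Ioc (0:ℝ) 1)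
    (hum_O : ∃ C : ℝ, ∃ δ > (0:ℝ), ∀ t ∈ Ioo (0:ℝ) δ, um t ≤ C / t ^ (1 - σ))
    -- the nonlinearity P, with semi-open domain, Lipschitz on closed bounded subsets
    (Dom : Set (F × ℝ)) (P : F → ℝ → Fm)
    (hDom : ∀ p ∈ Dom, ∃ δ > (0:ℝ), ∃ r > (0:ℝ),
      ∀ f : F, ‖f - p.1‖ < r → ∀ t ∈ Ico p.2 (p.2 + δ), (f, t) ∈ Dom)
    (hPlip : ∀ C : Set (F × ℝ), IsClosed C → Bornology.IsBounded C → C ⊆ Dom →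
      ∃ L M : ℝ, ∀ p ∈ C, ∀ q ∈ C,
        ‖P p.1 p.2 - P q.1 q.2‖ ≤ L * ‖p.1 - q.1‖ + M * |p.2 - q.2|)
    -- datum
    (t₀ : ℝ) (f₀ : F) (hf₀ : (f₀, t₀) ∈ Dom)
    (T T' : EReal) (hT : (t₀ : EReal) < T) (hT' : (t₀ : EReal) < T')
    -- φ is a solution of VP(f₀,t₀) on [t₀,T)
    (φ : ℝ → F)
    (hφ_cont : ContinuousOn φ {t : ℝ | t₀ ≤ t ∧ (t : EReal) < T})
    (hφ_dom : ∀ t : ℝ, t₀ ≤ t → (t : EReal) < T → (φ t, t) ∈ Dom)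
    (hφ_eq : ∀ t : ℝ, t₀ ≤ t → (t : EReal) < T →
      φ t = V (t - t₀) f₀ + ∫ s in t₀..t, W (t - s) (P (φ s) s))
    -- ψ is a solution of VP(f₀,t₀) on [t₀,T')
    (ψ : ℝ → F)
    (hψ_cont : ContinuousOn ψ {t : ℝ | t₀ ≤ t ∧ (t : EReal) < T'})
    (hψ_dom : ∀ t : ℝ, t₀ ≤ t → (t : EReal) < T' → (ψ t, t) ∈ Dom)
    (hψ_eq : ∀ t : ℝ, t₀ ≤ t → (t : EReal) < T' →
      ψ t = V (t - t₀) f₀ + ∫ s in t₀..t, W (t - s) (P (ψ s) s)) :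
    ∀ t : ℝ, t₀ ≤ t → (t : EReal) < min T T' → φ t = ψ t :=
  stmt_1_general ι hι_inj U V W hW hWcont um hum_cont hum_pos hum_bd σ hσ hum_O Dom P hPlip t₀ f₀ T
    T' φ hφ_cont hφ_dom hφ_eq ψ hψ_cont hψ_dom hψ_eq
end

section
/- For every σ ∈ (0,1], every z ∈ [0,∞) and every k ∈ ℕ, one has ∑_{j=k}^{∞} z^j/Γ(jσ+1) ≤ (z^k/Γ(kσ+1)) · E_σ(z), where E_σ(z) := ∑_{ℓ=0}^{∞} z^ℓ/Γ(ℓσ+1) is the Mittag-Leffler function (all series converge). -/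
open Real Filter


lemma gamma_supermul {a b : ℝ} (ha : 0 ≤ a) (hb : 0 ≤ b) :
    Real.Gamma (a + 1) * Real.Gamma (b + 1) ≤ Real.Gamma (a + b + 1) := by
  rcases eq_or_lt_of_le (add_nonneg ha hb) with h | h
  · have ha0 : a = 0 := by linarith
    have hb0 : b = 0 := by linarith
    simp [ha0, hb0, Real.Gamma_one]
  · set s := a + b with hs
    have hsp : (0:ℝ) < s := h
    have h1 : (1:ℝ) ∈ Set.Ioi (0:ℝ) := by norm_num
    have h2 : s + 1 ∈ Set.Ioi (0:ℝ) := by simp; linarith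
    have htb : 0 ≤ b / s := div_nonneg hb hsp.le
    have hta : 0 ≤ a / s := div_nonneg ha hsp.le
    have hsum : b / s + a / s = 1 := by field_simp; try linarith
    have hsum' : a / s + b / s = 1 := by field_simp; try linarith
    have c1 := Real.convexOn_log_Gamma.2 h1 h2 htb hta hsum
    have c2 := Real.convexOn_log_Gamma.2 h1 h2 hta htb hsum'
    have e1 : (b / s) • (1:ℝ) + (a / s) • (s + 1) = a + 1 := by
      simp only [smul_eq_mul]; field_simp; ring
    have e2 : (a / s) • (1:ℝ) + (b / s) • (s + 1) = b + 1 := by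
      simp only [smul_eq_mul]; field_simp; ring
    rw [e1] at c1
    rw [e2] at c2
    simp only [Function.comp_apply, smul_eq_mul, Real.Gamma_one, Real.log_one, mul_zero] at c1 c2
    have key : Real.log (Real.Gamma (a + 1)) + Real.log (Real.Gamma (b + 1)) ≤
        Real.log (Real.Gamma (s + 1)) := by
      have : (a / s) * Real.log (Real.Gamma (s + 1)) + (b / s) * Real.log (Real.Gamma (s + 1))
          = Real.log (Real.Gamma (s + 1)) := by
        rw [← add_mul, hsum']; ring
      linarith
    have pa := Real.Gamma_pos_of_pos (by linarith : (0:ℝ) < a + 1)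
    have pb := Real.Gamma_pos_of_pos (by linarith : (0:ℝ) < b + 1)
    have ps := Real.Gamma_pos_of_pos (by linarith : (0:ℝ) < s + 1)
    calc Real.Gamma (a + 1) * Real.Gamma (b + 1)
        = Real.exp (Real.log (Real.Gamma (a + 1)) + Real.log (Real.Gamma (b + 1))) := by
          rw [Real.exp_add, Real.exp_log pa, Real.exp_log pb]
      _ ≤ Real.exp (Real.log (Real.Gamma (s + 1))) := Real.exp_le_exp.mpr key
      _ = Real.Gamma (s + 1) := Real.exp_log ps


lemma exists_N (σ : ℝ) (hσ1 : 0 < σ) (hσ2 : σ ≤ 1) (z : ℝ) (hz : 0 ≤ z) :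
    ∃ N : ℕ, 0 < N ∧ 2 * z ^ N ≤ Real.Gamma ((N : ℝ) * σ + 1) := by
  set A : ℝ := (max 1 z) ^ (1/σ) with hA
  have hm0 : (0:ℝ) ≤ max 1 z := le_trans zero_le_one (le_max_left _ _)
  have hA0 : 0 ≤ A := Real.rpow_nonneg hm0 _
  have hA1 : 1 ≤ A := by
    have h := Real.rpow_le_rpow zero_le_one (le_max_left 1 z)
      (le_of_lt (by positivity : (0:ℝ) < 1/σ))
    rwa [Real.one_rpow] at h
  have hApos : 0 < A := lt_of_lt_of_le one_pos hA1
  have hAσ : A ^ σ = max 1 z := by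
    rw [hA, ← Real.rpow_mul hm0, one_div, inv_mul_cancel₀ hσ1.ne', Real.rpow_one]
  -- find j with 2 * A * A^j < j!
  have hsum := Real.summable_pow_div_factorial A
  have htend := hsum.tendsto_atTop_zero
  have hev : ∀ᶠ n in atTop, A ^ n / n.factorial < 1 / (2 * A) :=
    htend.eventually (gt_mem_nhds (by positivity))
  obtain ⟨j0, hj0⟩ := eventually_atTop.mp hev
  set j : ℕ := max j0 1 with hj
  have hjf : A ^ j / (j.factorial : ℝ) < 1 / (2 * A) := hj0 j (le_max_left _ _)
  have hj1 : 1 ≤ j := le_max_right _ _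
  -- choose N
  set N : ℕ := ⌈(j : ℝ) / σ⌉₊ with hNdef
  have hN1 : (j : ℝ) / σ ≤ N := Nat.le_ceil _
  have hjσ : (j : ℝ) ≤ (N : ℝ) * σ := by
    rw [div_le_iff₀ hσ1] at hN1; linarith
  have hNpos : 0 < N := by
    have : (0:ℝ) < (j:ℝ)/σ := by positivity
    exact Nat.ceil_pos.mpr this
  have hN2 : (N : ℝ) * σ ≤ (j : ℝ) + 1 := by
    have h1 : (N : ℝ) < (j : ℝ) / σ + 1 := Nat.ceil_lt_add_one (by positivity)
    have h2 : (1:ℝ) ≤ 1/σ := by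
      rw [le_div_iff₀ hσ1]; linarith
    have : (N : ℝ) ≤ ((j:ℝ) + 1) / σ := by
      rw [add_div]
      have : (1:ℝ)/σ ≥ 1 := h2
      nlinarith
    calc (N : ℝ) * σ ≤ (((j:ℝ)+1)/σ) * σ := by nlinarith
      _ = (j:ℝ) + 1 := by field_simp
  refine ⟨N, hNpos, ?_⟩
  -- chain
  have c1 : z ^ N ≤ (A ^ σ) ^ N := pow_le_pow_left₀ hz (by rw [hAσ]; exact le_max_right _ _) N
  have c2 : (A ^ σ) ^ N = A ^ ((N:ℝ) * σ) := by
    rw [← Real.rpow_natCast (A ^ σ) N, ← Real.rpow_mul hA0, mul_comm]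
  have c3 : A ^ ((N:ℝ) * σ) ≤ A ^ ((j:ℝ) + 1) := Real.rpow_le_rpow_of_exponent_le hA1 hN2
  have c4 : A ^ ((j:ℝ) + 1) = A * A ^ j := by
    rw [show ((j:ℝ) + 1) = ((j + 1 : ℕ) : ℝ) by push_cast; ring, Real.rpow_natCast, pow_succ]
    ring
  have c5 : 2 * (A * A ^ j) < (j.factorial : ℝ) := by
    have hfac : (0:ℝ) < j.factorial := by positivity
    rw [div_lt_div_iff₀ hfac (by positivity : (0:ℝ) < 2 * A)] at hjf
    nlinarith
  have c6 : (j.factorial : ℝ) ≤ Real.Gamma ((N:ℝ) * σ + 1) := by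
    rw [← Real.Gamma_nat_eq_factorial]
    have h2j : (2:ℝ) ≤ (j:ℝ) + 1 := by
      have : (1:ℝ) ≤ (j:ℝ) := by exact_mod_cast hj1
      linarith
    exact Real.Gamma_strictMonoOn_Ici.monotoneOn (Set.mem_Ici.mpr h2j)
      (Set.mem_Ici.mpr (by linarith)) (by linarith)
  have : 2 * z ^ N ≤ 2 * (A * A ^ j) := by
    have := c1.trans (c2.le.trans (c3.trans c4.le))
    linarith
  linarith

lemma ml_summable (σ : ℝ) (hσ1 : 0 < σ) (hσ2 : σ ≤ 1) (z : ℝ) (hz : 0 ≤ z) :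
    Summable (fun ℓ : ℕ => z ^ ℓ / Real.Gamma ((ℓ : ℝ) * σ + 1)) := by
  obtain ⟨N, hNpos, hbound⟩ := exists_N σ hσ1 hσ2 z hz
  set a : ℕ → ℝ := fun ℓ => z ^ ℓ / Real.Gamma ((ℓ : ℝ) * σ + 1) with ha
  have hΓpos : ∀ n : ℕ, 0 < Real.Gamma ((n : ℝ) * σ + 1) := fun n =>
    Real.Gamma_pos_of_pos (by positivity)
  have ha0 : ∀ n, 0 ≤ a n := fun n => div_nonneg (pow_nonneg hz n) (hΓpos n).le
  have hstep : ∀ n, a (n + N) ≤ (1/2) * a n := by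
    intro n
    have hsm := gamma_supermul (mul_nonneg (Nat.cast_nonneg n) hσ1.le)
      (mul_nonneg (Nat.cast_nonneg N) hσ1.le)
    have heq : (n : ℝ) * σ + (N : ℝ) * σ + 1 = ((n + N : ℕ) : ℝ) * σ + 1 := by
      push_cast; ring
    rw [heq] at hsm
    have h1 : a (n + N) ≤ z ^ (n + N) / (Real.Gamma ((n:ℝ)*σ+1) * Real.Gamma ((N:ℝ)*σ+1)) := by
      apply div_le_div_of_nonneg_left (pow_nonneg hz _) _ hsm
      · positivity
    have h2 : z ^ (n + N) / (Real.Gamma ((n:ℝ)*σ+1) * Real.Gamma ((N:ℝ)*σ+1))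
        = a n * (z ^ N / Real.Gamma ((N:ℝ)*σ+1)) := by
      rw [ha, pow_add]; field_simp
    have h3 : z ^ N / Real.Gamma ((N:ℝ)*σ+1) ≤ 1/2 := by
      rw [div_le_div_iff₀ (hΓpos N) (by norm_num)]
      linarith
    calc a (n + N) ≤ a n * (z ^ N / Real.Gamma ((N:ℝ)*σ+1)) := h1.trans_eq h2
      _ ≤ a n * (1/2) := mul_le_mul_of_nonneg_left h3 (ha0 n)
      _ = (1/2) * a n := by ring
  set C : ℝ := ∑ s ∈ Finset.range N, a s with hC
  have hCle : ∀ n < N, a n ≤ C :=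
    fun n hn => Finset.single_le_sum (fun s _ => ha0 s) (Finset.mem_range.mpr hn)
  have hC0 : 0 ≤ C := Finset.sum_nonneg fun s _ => ha0 s
  have hmain : ∀ n, a n ≤ C * (1/2 : ℝ) ^ (n / N) := by
    intro n
    induction n using Nat.strong_induction_on with
    | _ n ih =>
      by_cases hn : n < N
      · rw [Nat.div_eq_of_lt hn, pow_zero, mul_one]; exact hCle n hn
      · push_neg at hn
        have hrec := hstep (n - N)
        rw [Nat.sub_add_cancel hn] at hrec
        have hih := ih (n - N) (by omega)
        have hdiv : n / N = (n - N) / N + 1 := by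
          rw [Nat.div_eq_sub_div hNpos hn]
        calc a n ≤ (1/2) * a (n - N) := hrec
          _ ≤ (1/2) * (C * (1/2) ^ ((n - N)/N)) := by linarith
          _ = C * (1/2) ^ ((n - N)/N + 1) := by ring
          _ = C * (1/2) ^ (n / N) := by rw [hdiv]
  have hsum2 : Summable (fun n : ℕ => C * (1/2 : ℝ) ^ (n / N)) := by
    apply Summable.mul_left
    set q : ℝ := (1/2 : ℝ) ^ ((N : ℝ)⁻¹) with hq
    have hNR : (0:ℝ) < N := by exact_mod_cast hNpos
    have hq0 : 0 ≤ q := Real.rpow_nonneg (by norm_num) _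
    have hq1 : q < 1 := Real.rpow_lt_one (by norm_num) (by norm_num) (by positivity)
    apply Summable.of_nonneg_of_le (fun n => by positivity) (fun n => ?_)
      ((summable_geometric_of_lt_one hq0 hq1).mul_left 2)
    -- (1/2)^(n/N) ≤ 2 * q^n
    have e1 : ((1/2 : ℝ)) ^ (n / N) = (1/2 : ℝ) ^ (((n / N : ℕ) : ℝ)) :=
      (Real.rpow_natCast _ _).symm
    have e2 : 2 * q ^ n = (1/2 : ℝ) ^ ((N:ℝ)⁻¹ * n - 1) := by
      rw [← Real.rpow_natCast q n, hq, ← Real.rpow_mul (by norm_num : (0:ℝ) ≤ 1/2),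
        sub_eq_add_neg, Real.rpow_add (by norm_num : (0:ℝ) < 1/2)]
      rw [Real.rpow_neg_one]
      norm_num; ring
    rw [e1, e2]
    apply Real.rpow_le_rpow_of_exponent_ge (by norm_num) (by norm_num)
    -- (N:ℝ)⁻¹ * n - 1 ≤ ((n/N : ℕ) : ℝ)
    have hmod : n % N < N := Nat.mod_lt _ hNpos
    have hdm : N * (n / N) + n % N = n := Nat.div_add_mod n N
    have : (n : ℝ) < (N:ℝ) * ((n / N : ℕ) : ℝ) + N := by
      exact_mod_cast Nat.lt_of_lt_of_le (by omega) le_rfl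
    rw [inv_mul_eq_div, div_sub_one hNR.ne', div_le_iff₀ hNR]
    linarith
  exact Summable.of_nonneg_of_le ha0 hmain hsum2

/-- Tail estimate for the Mittag-Leffler series: for `σ ∈ (0,1]`, `z ≥ 0` and `k ∈ ℕ`,
the series `∑_{ℓ} z^ℓ / Γ(ℓσ + 1)` converges and
`∑_{j ≥ k} z^j / Γ(jσ+1) ≤ (z^k / Γ(kσ+1)) · E_σ(z)`,
where `E_σ(z) = ∑_{ℓ} z^ℓ / Γ(ℓσ+1)` is the Mittag-Leffler function. -/

theorem stmt_3 (σ : ℝ) (hσ : σ ∈ Set.Ioc (0:ℝ) 1) (z : ℝ) (hz : 0 ≤ z) (k : ℕ) :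
    Summable (fun ℓ : ℕ => z ^ ℓ / Real.Gamma ((ℓ : ℝ) * σ + 1)) ∧
    (∑' j : ℕ, z ^ (k + j) / Real.Gamma (((k + j : ℕ) : ℝ) * σ + 1)) ≤
      z ^ k / Real.Gamma ((k : ℝ) * σ + 1) *
        ∑' ℓ : ℕ, z ^ ℓ / Real.Gamma ((ℓ : ℝ) * σ + 1) := by
  obtain ⟨hσ1, hσ2⟩ := hσ
  have S := ml_summable σ hσ1 hσ2 z hz
  refine ⟨S, ?_⟩
  have hΓpos : ∀ n : ℕ, 0 < Real.Gamma ((n : ℝ) * σ + 1) := fun n =>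
    Real.Gamma_pos_of_pos (by positivity)
  set a : ℕ → ℝ := fun ℓ => z ^ ℓ / Real.Gamma ((ℓ : ℝ) * σ + 1) with ha
  set c : ℝ := z ^ k / Real.Gamma ((k : ℝ) * σ + 1) with hc
  have hc0 : 0 ≤ c := div_nonneg (pow_nonneg hz k) (hΓpos k).le
  have hpt : ∀ j : ℕ, z ^ (k + j) / Real.Gamma (((k + j : ℕ) : ℝ) * σ + 1) ≤ c * a j := by
    intro j
    have hsm := gamma_supermul (mul_nonneg (Nat.cast_nonneg k) hσ1.le)
      (mul_nonneg (Nat.cast_nonneg j) hσ1.le)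
    have heq : (k : ℝ) * σ + (j : ℝ) * σ + 1 = ((k + j : ℕ) : ℝ) * σ + 1 := by
      push_cast; ring
    rw [heq] at hsm
    have h1 : z ^ (k + j) / Real.Gamma (((k + j : ℕ) : ℝ) * σ + 1)
        ≤ z ^ (k + j) / (Real.Gamma ((k:ℝ)*σ+1) * Real.Gamma ((j:ℝ)*σ+1)) := by
      apply div_le_div_of_nonneg_left (pow_nonneg hz _) _ hsm
      positivity
    refine h1.trans_eq ?_
    rw [hc, ha, pow_add]
    field_simp
  have Sshift : Summable (fun j : ℕ => z ^ (k + j) / Real.Gamma (((k + j : ℕ) : ℝ) * σ + 1)) := by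
    have hinj : Function.Injective (fun j : ℕ => k + j) := add_right_injective k
    exact S.comp_injective hinj
  calc (∑' j : ℕ, z ^ (k + j) / Real.Gamma (((k + j : ℕ) : ℝ) * σ + 1))
      ≤ ∑' j : ℕ, c * a j := Summable.tsum_le_tsum hpt Sshift (S.mul_left c)
    _ = c * ∑' ℓ : ℕ, a ℓ := tsum_mul_left
end
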